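/- arXiv:2106.00301 — 4 statements merged into one kernel-verified Lean document; each statement's English description precedes it below -/
import Mathlib

section
/- Let K be a TOMKS, let C₀ ⊆ {1,…,n}, let t ≥ 3, and let i₁ < i₂ < … < i_t be elements of {1,…,n} \ C₀. Suppose C₁ := C₀ ∪ {i₁} and C₂ := C₀ ∪ {i₂,…,i_t} are both covers for K, and set C := C₁ ∪ C₂. Then: (a) {C₁, C₂} is a multi-cover for K; and (b) every x ∈ K satisfies Σ_{i∈C, i<i₁} t·x_i + Σ_{i∈C, i₁≤i<i₂} (t−1)·x_i + Σ_{ℓ=3}^{t} Σ_{i∈C, i_{ℓ−1}<i<i_ℓ} (t−ℓ+2)·x_i + Σ_{ℓ=2}^{t} x_{i_ℓ} + Σ_{i∈C, i>i_t} x_i ≤ β, where β is the value of the left-hand side at the incidence vector χ^{C₁} of C₁, minus 1. -/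
open Finset

/-- `S₁` dominates `S₂`: there is an injection `f : S₂ → S₁` with `f i ≤ i`. -/
def Dominates {n : ℕ} (S₁ S₂ : Finset (Fin n)) : Prop :=
  ∃ f : Fin n → Fin n, Set.InjOn f (S₂ : Set (Fin n)) ∧ ∀ i ∈ S₂, f i ∈ S₁ ∧ f i ≤ i

/-- Columns of `A` are componentwise non-increasing. -/
def ColsOrdered {m n : ℕ} (A : Fin m → Fin n → ℕ) : Prop :=
  ∀ j : Fin m, ∀ i i' : Fin n, i ≤ i' → A j i' ≤ A j i

/-- `S` is a cover for the multiple knapsack set given by `A, b`. -/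
def IsCover {m n : ℕ} (A : Fin m → Fin n → ℕ) (b : Fin m → ℕ) (S : Finset (Fin n)) : Prop :=
  ∃ j : Fin m, b j < ∑ i ∈ S, A j i

/-- Minimal cover: a cover none of whose proper subsets is a cover. -/
def IsMinimalCover {m n : ℕ} (A : Fin m → Fin n → ℕ) (b : Fin m → ℕ)
    (S : Finset (Fin n)) : Prop :=
  IsCover A b S ∧ ∀ S' ⊂ S, ¬ IsCover A b S'

/-- The union `C = ∪ₕ Cₕ`. -/
def unionC {n k : ℕ} (C : Fin k → Finset (Fin n)) : Finset (Fin n) :=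
  Finset.univ.sup C

/-- The intersection `C₀ = ∩ₕ Cₕ`. -/
def interC {n k : ℕ} (C : Fin k → Finset (Fin n)) : Finset (Fin n) :=
  Finset.univ.inf C

/-- `{C₁,…,C_k}` is a multi-cover for the TOMKS given by `A, b`. -/
def MultiCover {m n k : ℕ} (A : Fin m → Fin n → ℕ) (b : Fin m → ℕ)
    (C : Fin k → Finset (Fin n)) : Prop :=
  (∀ h, IsCover A b (C h)) ∧
  ∀ T ⊆ unionC C \ interC C, (∀ h, T ≠ C h \ interC C) →
    ∃ h, Dominates T (C h \ interC C) ∨ Dominates (C h \ interC C) T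

/-- Max of `g` over `S`, with the empty maximum taken to be `0`. -/
def fmax {ι : Type*} (S : Finset ι) (g : ι → ℤ) : ℤ :=
  if h : S.Nonempty then S.sup' h g else 0

/-- Min of `g` over `S`, with the empty minimum taken to be `0`. -/
def fmin {ι : Type*} (S : Finset ι) (g : ι → ℤ) : ℤ :=
  if h : S.Nonempty then S.inf' h g else 0

/-- `α` is an MCI coefficient vector for the family of covers `C`. -/
def IsMCICoeff {n k : ℕ} (C : Fin k → Finset (Fin n)) (α : Fin n → ℤ) : Prop :=
  (∀ i, i ∉ unionC C → α i = 0) ∧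
  (∀ i ∈ unionC C \ interC C, (∀ j ∈ unionC C \ interC C, j ≤ i) → α i = 1) ∧
  (∀ i ∈ unionC C \ interC C, (∃ j ∈ unionC C \ interC C, i < j) →
    ∀ h : Fin k, i ∈ C h →
      1 + fmax ((unionC C \ C h).filter (fun ℓ => i < ℓ)) α ≤ α i) ∧
  (∀ j ∈ interC C, ∃ h : Fin k,
    max (fmax ((unionC C \ C h).filter (fun ℓ => ℓ < j)) α)
        (1 + ∑ ℓ ∈ (unionC C \ C h).filter (fun ℓ => j < ℓ), α ℓ) ≤ α j)

/-- `α` is the S-MCI coefficient vector for the family of covers `C`. -/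
def IsSMCICoeff {n k : ℕ} (C : Fin k → Finset (Fin n)) (α : Fin n → ℤ) : Prop :=
  (∀ i, i ∉ unionC C → α i = 0) ∧
  (∀ i ∈ unionC C \ interC C,
    α i = 1 + fmax (Finset.univ.filter (fun h : Fin k => i ∈ C h))
        (fun h => fmax ((unionC C \ C h).filter (fun ℓ => i < ℓ)) α)) ∧
  (∀ j ∈ interC C,
    α j = fmin (Finset.univ : Finset (Fin k))
        (fun h => max (fmax ((unionC C \ C h).filter (fun ℓ => ℓ < j)) α)
            (1 + ∑ ℓ ∈ (unionC C \ C h).filter (fun ℓ => j < ℓ), α ℓ)))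

/-- Second-smallest value of the multiset `{α i : i ∈ D}` (for `|D| ≥ 2`). -/
def secondMin {n : ℕ} (α : Fin n → ℤ) (D : Finset (Fin n)) : ℤ :=
  fmax D (fun j => fmin (D.erase j) α)

/-- `πᵀ x ≤ 1` is a non-trivial facet-defining inequality for `conv(K)`. -/
def IsNontrivialFacet {m n : ℕ} (A : Fin m → Fin n → ℕ) (b : Fin m → ℕ)
    (pv : Fin n → ℝ) : Prop :=
  (∀ i, 0 ≤ pv i) ∧
  (∃ i j : Fin n, i ≠ j ∧ pv i ≠ 0 ∧ pv j ≠ 0) ∧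
  (∀ x : Fin n → ℝ, (∀ i, x i = 0 ∨ x i = 1) →
    (∀ j, ∑ i, (A j i : ℝ) * x i ≤ (b j : ℝ)) → ∑ i, pv i * x i ≤ 1) ∧
  (∃ pts : Fin n → (Fin n → ℝ), AffineIndependent ℝ pts ∧
    ∀ ℓ, (∀ i, pts ℓ i = 0 ∨ pts ℓ i = 1) ∧
      (∀ j, ∑ i, (A j i : ℝ) * pts ℓ i ≤ (b j : ℝ)) ∧
      ∑ i, pv i * pts ℓ i = 1)

/-- `S` is a cover for the single knapsack set given by `a, b`. -/
def IsCoverK {n : ℕ} (a : Fin n → ℕ) (b : ℕ) (S : Finset (Fin n)) : Prop :=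
  b < ∑ i ∈ S, a i

/-- Minimal cover for a single knapsack set. -/
def IsMinimalCoverK {n : ℕ} (a : Fin n → ℕ) (b : ℕ) (S : Finset (Fin n)) : Prop :=
  IsCoverK a b S ∧ ∀ S' ⊂ S, ¬ IsCoverK a b S'


set_option maxHeartbeats 1600000

section AuxMCI

/-- closed-form coefficient -/
def al {n : ℕ} (t : ℕ) (e : ℕ → Fin n) (i : Fin n) : ℤ :=
  if i ∈ (Finset.Icc 2 t).image e then 1
  else 1 + (if i < e 1 then 1 else 0) + (((Finset.Icc 3 t).filter (fun ℓ => i < e ℓ)).card : ℤ)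

lemma al_nonneg {n : ℕ} (t : ℕ) (e : ℕ → Fin n) (i : Fin n) : 0 ≤ al t e i := by
  unfold al; split
  · norm_num
  · positivity

lemma filter_Icc_eq (t : ℕ) (P : ℕ → Prop) [DecidablePred P]
    (hdown : ∀ k l, 1 ≤ k → k ≤ l → l ≤ t → P l → P k) :
    (Finset.Icc 1 t).filter P = Finset.Icc 1 (((Finset.Icc 1 t).filter P).card) := by
  rcases ((Finset.Icc 1 t).filter P).eq_empty_or_nonempty with he | hne
  · rw [he]; simp
  · obtain ⟨M, hMmem, hMmax⟩ : ∃ M ∈ (Finset.Icc 1 t).filter P,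
        ∀ x ∈ (Finset.Icc 1 t).filter P, x ≤ M :=
      ⟨_, Finset.max'_mem _ hne, fun x hx => Finset.le_max' _ x hx⟩
    rw [Finset.mem_filter, Finset.mem_Icc] at hMmem
    have hFeq : (Finset.Icc 1 t).filter P = Finset.Icc 1 M := by
      ext x
      rw [Finset.mem_filter, Finset.mem_Icc, Finset.mem_Icc]
      constructor
      · intro ⟨⟨h1, h2⟩, h3⟩
        exact ⟨h1, hMmax x (by rw [Finset.mem_filter, Finset.mem_Icc]; exact ⟨⟨h1,h2⟩,h3⟩)⟩
      · intro ⟨h1, h2⟩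
        exact ⟨⟨h1, le_trans h2 hMmem.1.2⟩, hdown x M h1 h2 hMmem.1.2 hMmem.2⟩
    rw [hFeq, Nat.card_Icc]
    congr 1

lemma coeff_eq {n : ℕ} {t : ℕ} (ht : 3 ≤ t) {e : ℕ → Fin n}
    (hmono : StrictMonoOn e (Set.Icc 1 t)) (i : Fin n) :
    (if i < e 1 then (t:ℤ) else 0) + (if e 1 ≤ i ∧ i < e 2 then (t:ℤ)-1 else 0)
    + (∑ ℓ ∈ Finset.Icc 3 t, if e (ℓ-1) < i ∧ i < e ℓ then (t:ℤ)-(ℓ:ℤ)+2 else 0)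
    + (if i ∈ (Finset.Icc 2 t).image e then 1 else 0) + (if e t < i then 1 else 0)
    = al t e i := by
  classical
  have hdom : ∀ k : ℕ, 1 ≤ k → k ≤ t → (k:ℕ) ∈ Set.Icc 1 t := fun k h1 h2 => ⟨h1, h2⟩
  have hlt : ∀ k l : ℕ, 1 ≤ k → k < l → l ≤ t → e k < e l := fun k l h1 h2 h3 =>
    hmono (hdom k h1 (by omega)) (hdom l (by omega) h3) h2
  have hle : ∀ k l : ℕ, 1 ≤ k → k ≤ l → l ≤ t → e k ≤ e l := by
    intro k l h1 h2 h3
    rcases eq_or_lt_of_le h2 with rfl | h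
    · exact le_rfl
    · exact (hlt k l h1 h h3).le
  by_cases hpts : i ∈ (Finset.Icc 2 t).image e
  · rw [al, if_pos hpts]
    obtain ⟨k, hk, rfl⟩ := Finset.mem_image.mp hpts
    rw [Finset.mem_Icc] at hk
    have h1 : ¬ (e k < e 1) := not_lt.mpr (hle 1 k (by omega) (by omega) hk.2)
    have h2 : ¬ (e k < e 2) := not_lt.mpr (hle 2 k (by omega) hk.1 hk.2)
    have h5 : ¬ (e t < e k) := not_lt.mpr (hle k t (by omega) hk.2 le_rfl)
    have hsum0 : (∑ ℓ ∈ Finset.Icc 3 t,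
        if e (ℓ-1) < e k ∧ e k < e ℓ then (t:ℤ)-(ℓ:ℤ)+2 else 0) = 0 := by
      apply Finset.sum_eq_zero
      intro ℓ hℓ
      rw [Finset.mem_Icc] at hℓ
      rw [if_neg]
      rintro ⟨hA, hB⟩
      have hA' := (hmono.lt_iff_lt (hdom (ℓ-1) (by omega) (by omega))
        (hdom k (by omega) hk.2)).mp hA
      have hB' := (hmono.lt_iff_lt (hdom k (by omega) hk.2)
        (hdom ℓ (by omega) hℓ.2)).mp hB
      omega
    rw [if_neg h1, if_neg (by tauto), hsum0, if_pos hpts, if_neg h5]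
    norm_num
  · rw [al, if_neg hpts, if_neg hpts]
    by_cases h1 : i < e 1
    · have h2 : ¬ (e 1 ≤ i ∧ i < e 2) := fun h => absurd h.1 (not_le.mpr h1)
      have hsum0 : (∑ ℓ ∈ Finset.Icc 3 t,
          if e (ℓ-1) < i ∧ i < e ℓ then (t:ℤ)-(ℓ:ℤ)+2 else 0) = 0 := by
        apply Finset.sum_eq_zero
        intro ℓ hℓ
        rw [Finset.mem_Icc] at hℓ
        rw [if_neg]
        rintro ⟨hA, _⟩
        exact absurd (lt_trans hA h1) (not_lt.mpr (hle 1 (ℓ-1) le_rfl (by omega) (by omega)))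
      have h5 : ¬ (e t < i) :=
        fun h => absurd (lt_trans h h1) (not_lt.mpr (hle 1 t le_rfl (by omega) le_rfl))
      have hfull : (Finset.Icc 3 t).filter (fun ℓ => i < e ℓ) = Finset.Icc 3 t := by
        apply Finset.filter_true_of_mem
        intro ℓ hℓ
        rw [Finset.mem_Icc] at hℓ
        exact lt_of_lt_of_le h1 (hle 1 ℓ le_rfl (by omega) hℓ.2)
      rw [if_pos h1, if_neg h2, hsum0, if_neg h5, hfull, Nat.card_Icc]
      have : ((t + 1 - 3 : ℕ) : ℤ) = (t:ℤ) - 2 := by omega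
      rw [this, if_pos h1]; ring
    · by_cases h2 : i < e 2
      · have he1 : e 1 ≤ i := not_lt.mp h1
        have hsum0 : (∑ ℓ ∈ Finset.Icc 3 t,
            if e (ℓ-1) < i ∧ i < e ℓ then (t:ℤ)-(ℓ:ℤ)+2 else 0) = 0 := by
          apply Finset.sum_eq_zero
          intro ℓ hℓ
          rw [Finset.mem_Icc] at hℓ
          rw [if_neg]
          rintro ⟨hA, _⟩
          exact absurd (lt_trans h2 (lt_of_le_of_lt (hle 2 (ℓ-1) (by omega) (by omega) (by omega)) hA))
            (lt_irrefl i)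
        have h5 : ¬ (e t < i) :=
          fun h => absurd (lt_trans h (lt_of_lt_of_le h2 (hle 2 t (by omega) (by omega) le_rfl)))
            (lt_irrefl _)
        have hfull : (Finset.Icc 3 t).filter (fun ℓ => i < e ℓ) = Finset.Icc 3 t := by
          apply Finset.filter_true_of_mem
          intro ℓ hℓ
          rw [Finset.mem_Icc] at hℓ
          exact lt_of_lt_of_le h2 (hle 2 ℓ (by omega) (by omega) hℓ.2)
        rw [if_neg h1, if_pos ⟨he1, h2⟩, hsum0, if_neg h5, hfull, Nat.card_Icc]
        have : ((t + 1 - 3 : ℕ) : ℤ) = (t:ℤ) - 2 := by omega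
        rw [this, if_neg h1]; ring
      · by_cases h5 : e t < i
        · have hsum0 : (∑ ℓ ∈ Finset.Icc 3 t,
              if e (ℓ-1) < i ∧ i < e ℓ then (t:ℤ)-(ℓ:ℤ)+2 else 0) = 0 := by
            apply Finset.sum_eq_zero
            intro ℓ hℓ
            rw [Finset.mem_Icc] at hℓ
            rw [if_neg]
            rintro ⟨_, hB⟩
            exact absurd (lt_trans hB (lt_of_le_of_lt (hle ℓ t (by omega) hℓ.2 le_rfl) h5))
              (lt_irrefl i)
          have hempty : (Finset.Icc 3 t).filter (fun ℓ => i < e ℓ) = ∅ := by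
            apply Finset.filter_false_of_mem
            intro ℓ hℓ
            rw [Finset.mem_Icc] at hℓ
            exact not_lt.mpr (le_of_lt (lt_of_le_of_lt (hle ℓ t (by omega) hℓ.2 le_rfl) h5))
          rw [if_neg h1, if_neg (fun hh => h2 hh.2), hsum0, if_pos h5, hempty, if_neg h1]
          norm_num
        · have hit : i < e t := lt_of_le_of_ne (not_lt.mp h5)
            (fun h => hpts (Finset.mem_image.mpr ⟨t, Finset.mem_Icc.mpr ⟨by omega, le_rfl⟩, h.symm⟩))
          have hFne : ∃ k ∈ (Finset.Icc 1 t).filter (fun ℓ => i < e ℓ),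
              ∀ x ∈ (Finset.Icc 1 t).filter (fun ℓ => i < e ℓ), k ≤ x := by
            have hne : ((Finset.Icc 1 t).filter (fun ℓ => i < e ℓ)).Nonempty :=
              ⟨t, Finset.mem_filter.mpr ⟨Finset.mem_Icc.mpr ⟨by omega, le_rfl⟩, hit⟩⟩
            exact ⟨_, Finset.min'_mem _ hne, fun x hx => Finset.min'_le _ x hx⟩
          obtain ⟨k, hkF, hkmin⟩ := hFne
          rw [Finset.mem_filter, Finset.mem_Icc] at hkF
          have hk1 : k ≠ 1 := fun h => h1 (h ▸ hkF.2)
          have hk2 : k ≠ 2 := fun h => h2 (h ▸ hkF.2)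
          have hk3 : 3 ≤ k := by rcases hkF.1 with ⟨hh1, _⟩; omega
          have hkm : e (k-1) ≤ i := by
            by_contra hc
            push_neg at hc
            have hmem : k - 1 ∈ (Finset.Icc 1 t).filter (fun ℓ => i < e ℓ) :=
              Finset.mem_filter.mpr ⟨Finset.mem_Icc.mpr ⟨by omega, by omega⟩, hc⟩
            have := hkmin _ hmem
            omega
          have hkm' : e (k-1) < i := lt_of_le_of_ne hkm
            (fun h => hpts (Finset.mem_image.mpr ⟨k-1, Finset.mem_Icc.mpr ⟨by omega, by omega⟩, h⟩))
          have hsum : (∑ ℓ ∈ Finset.Icc 3 t,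
              if e (ℓ-1) < i ∧ i < e ℓ then (t:ℤ)-(ℓ:ℤ)+2 else 0) = (t:ℤ)-(k:ℤ)+2 := by
            rw [Finset.sum_eq_single_of_mem k (Finset.mem_Icc.mpr ⟨hk3, hkF.1.2⟩)]
            · rw [if_pos ⟨hkm', hkF.2⟩]
            · intro ℓ hℓ hℓk
              rw [Finset.mem_Icc] at hℓ
              rw [if_neg]
              rintro ⟨hA, hB⟩
              have hkℓ : k ≤ ℓ := hkmin ℓ
                (Finset.mem_filter.mpr ⟨Finset.mem_Icc.mpr ⟨by omega, hℓ.2⟩, hB⟩)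
              have hkℓ1 : e k ≤ e (ℓ-1) := hle k (ℓ-1) (by omega) (by omega) (by omega)
              exact absurd (lt_trans hkF.2 (lt_of_le_of_lt hkℓ1 hA)) (lt_irrefl i)
          have hfilter : (Finset.Icc 3 t).filter (fun ℓ => i < e ℓ) = Finset.Icc k t := by
            ext ℓ
            rw [Finset.mem_filter, Finset.mem_Icc, Finset.mem_Icc]
            constructor
            · rintro ⟨⟨hh3, hht⟩, hhe⟩
              exact ⟨hkmin ℓ (Finset.mem_filter.mpr
                ⟨Finset.mem_Icc.mpr ⟨by omega, hht⟩, hhe⟩), hht⟩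
            · rintro ⟨hh1, hh2⟩
              exact ⟨⟨by omega, hh2⟩, lt_of_lt_of_le hkF.2 (hle k ℓ (by omega) hh1 hh2)⟩
          rw [if_neg h1, if_neg (fun hh => h2 hh.2), hsum, if_neg h5, hfilter, Nat.card_Icc]
          have hc : ((t + 1 - k : ℕ) : ℤ) = (t:ℤ) - (k:ℤ) + 1 := by
            have := hkF.1.2; omega
          rw [hc, if_neg h1]; ring

lemma dominates_cover {m n : ℕ} {A : Fin m → Fin n → ℕ} {b : Fin m → ℕ}
    (hA : ColsOrdered A) {S D : Finset (Fin n)} (hdom : Dominates S D)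
    (hD : IsCover A b D) : IsCover A b S := by
  obtain ⟨j, hj⟩ := hD
  obtain ⟨f, hinj, hf⟩ := hdom
  refine ⟨j, lt_of_lt_of_le hj ?_⟩
  calc ∑ i ∈ D, A j i ≤ ∑ i ∈ D, A j (f i) :=
        Finset.sum_le_sum fun i hi => hA j (f i) i (hf i hi).2
    _ = ∑ i ∈ D.image f, A j i := (Finset.sum_image (fun x hx y hy h => hinj hx hy h)).symm
    _ ≤ ∑ i ∈ S, A j i := Finset.sum_le_sum_of_subset (by
        intro i hi
        obtain ⟨x, hx, rfl⟩ := Finset.mem_image.mp hi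
        exact (hf x hx).1)

lemma hall_dominates {n : ℕ} {S D : Finset (Fin n)}
    (h : ∀ p : Fin n, (D.filter (· ≤ p)).card ≤ (S.filter (· ≤ p)).card) :
    Dominates S D := by
  classical
  set t : {i // i ∈ D} → Finset (Fin n) := fun i => S.filter (· ≤ i.1) with ht
  have hall : ∀ s : Finset {i // i ∈ D}, s.card ≤ (s.biUnion t).card := by
    intro s
    rcases s.eq_empty_or_nonempty with rfl | hs
    · simp
    · obtain ⟨d, hd, hdmax⟩ := s.exists_max_image (fun i => i.1) hs
      have h1 : s.card = (s.image (fun i => i.1)).card :=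
        (Finset.card_image_of_injective s Subtype.val_injective).symm
      have h2 : s.image (fun i => i.1) ⊆ D.filter (· ≤ d.1) := by
        intro i hi
        obtain ⟨x, hx, rfl⟩ := Finset.mem_image.mp hi
        exact Finset.mem_filter.mpr ⟨x.2, hdmax x hx⟩
      have h3 : t d ⊆ s.biUnion t := Finset.subset_biUnion_of_mem t hd
      calc s.card = (s.image (fun i => i.1)).card := h1
        _ ≤ (D.filter (· ≤ d.1)).card := Finset.card_le_card h2
        _ ≤ (S.filter (· ≤ d.1)).card := h d.1
        _ ≤ (s.biUnion t).card := Finset.card_le_card h3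
  obtain ⟨f, hfinj, hft⟩ := (Finset.all_card_le_biUnion_card_iff_exists_injective t).mp hall
  refine ⟨fun i => if h : i ∈ D then f ⟨i, h⟩ else i, ?_, ?_⟩
  · intro x hx y hy hxy
    simp only [Finset.mem_coe] at hx hy
    simp only [dif_pos hx, dif_pos hy] at hxy
    exact Subtype.ext_iff.mp (hfinj hxy)
  · intro i hi
    simp only [dif_pos hi]
    have := hft ⟨i, hi⟩
    rw [Finset.mem_filter] at this
    exact ⟨this.1, this.2⟩

lemma endgameII (t a b np nq σa σb σt s₁ Sr Ba Bb W : ℤ)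
    (ht : 3 ≤ t) (ha0 : 0 ≤ a) (hab : a < b) (hbt : b ≤ t)
    (hnp : 0 ≤ np) (hnpq : np ≤ nq)
    (hσa0 : 0 ≤ σa) (hσaa : σa ≤ a) (hσb0 : 0 ≤ σb) (hσbb : σb ≤ b)
    (hσlip : σb ≤ σa + (b - a))
    (hs₁0 : 0 ≤ s₁) (hs₁1 : s₁ ≤ 1) (hs₁σa : 1 ≤ a → s₁ ≤ σa) (hs₁σb : s₁ ≤ σb)
    (hσt : σt ≤ σb + (t - b)) (hsum : s₁ + Sr = σt)
    (hF1 : σa + 1 ≤ np + (if 1 ≤ a then 1 else 0))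
    (hF2 : σb + 1 ≤ nq + (b - 1))
    (hBa1 : a ≤ 1 → Ba = t - a) (hBa2 : 2 ≤ a → Ba = t - a + 1)
    (hBb1 : b ≤ 1 → Bb = t - b) (hBb2 : 2 ≤ b → Bb = t - b + 1)
    (hW : np * Ba + (nq - np) * Bb ≤ W) :
    (t-1)*s₁ + Sr + 1 ≤ W + (t-1) := by
  have hb1 : 1 ≤ b := by omega
  rcases le_or_gt a 1 with haa | haa
  · rw [hBa1 haa] at hW
    rcases le_or_gt b 1 with hbb | hbb
    · -- a = 0, b = 1
      have ha : a = 0 := by omega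
      have hb : b = 1 := by omega
      rw [hBb1 hbb] at hW
      have h1 : 1 ≤ np := by simp [ha] at hF1; omega
      have h2 : σb + 1 ≤ nq := by omega
      nlinarith [mul_nonneg (by omega : (0:ℤ) ≤ np - 1) (by omega : (0:ℤ) ≤ t - a - (t - b)),
        mul_nonneg (by omega : (0:ℤ) ≤ nq - np) (by omega : (0:ℤ) ≤ t - b - 1),
        mul_nonneg (by omega : (0:ℤ) ≤ nq - σb - 1) (by omega : (0:ℤ) ≤ t - b)]
    · -- a ≤ 1, b ≥ 2
      rw [hBb2 hbb] at hW
      rcases le_or_gt a 0 with ha | ha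
      · -- a = 0
        have ha : a = 0 := by omega
        have h1 : 1 ≤ np := by simp [ha] at hF1; omega
        have h2 : σb - b + 2 ≤ nq := by omega
        -- if σb - b + 2 ≤ 1 : nq ≥ np ≥ 1, W ≥ (b-1) + (t-b+1) = t
        rcases le_or_gt (σb - b + 2) 1 with hν | hν
        · nlinarith [mul_nonneg (by omega : (0:ℤ) ≤ np - 1) (by omega : (0:ℤ) ≤ (t-a) - (t-b+1)),
            mul_nonneg (by omega : (0:ℤ) ≤ nq - np) (by omega : (0:ℤ) ≤ t - b + 1)]
        · nlinarith [mul_nonneg (by omega : (0:ℤ) ≤ np - 1) (by omega : (0:ℤ) ≤ (t-a) - (t-b+1)),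
            mul_nonneg (by omega : (0:ℤ) ≤ nq - np) (by omega : (0:ℤ) ≤ t - b + 1),
            mul_nonneg (by omega : (0:ℤ) ≤ nq - (σb - b + 2)) (by omega : (0:ℤ) ≤ t - b + 1),
            mul_nonneg (by omega : (0:ℤ) ≤ σb - b + 2 - 1) (by omega : (0:ℤ) ≤ t - b)]
      · -- a = 1
        have ha : a = 1 := by omega
        have h1 : σa ≤ np := by rw [if_pos (by omega)] at hF1; omega
        have h2 : σb - b + 2 ≤ nq := by omega
        rcases le_or_gt s₁ 0 with hs | hs
        · -- s₁ = 0
          rcases le_or_gt (σb - b + 2) 0 with hν | hν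
          · nlinarith [mul_nonneg hnp (by omega : (0:ℤ) ≤ (t-a) - (t-b+1)),
              mul_nonneg (by omega : (0:ℤ) ≤ nq - np) (by omega : (0:ℤ) ≤ t - b + 1)]
          · nlinarith [mul_nonneg hnp (by omega : (0:ℤ) ≤ (t-a) - (t-b+1)),
              mul_nonneg (by omega : (0:ℤ) ≤ nq - np) (by omega : (0:ℤ) ≤ t - b + 1),
              mul_nonneg (by omega : (0:ℤ) ≤ nq - (σb - b + 2)) (by omega : (0:ℤ) ≤ t - b + 1),
              mul_nonneg (by omega : (0:ℤ) ≤ σb - b + 2) (by omega : (0:ℤ) ≤ t - b)]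
        · -- s₁ = 1, np ≥ σa ≥ s₁ = 1
          have hs1 : s₁ = 1 := by omega
          have h3 : 1 ≤ np := by have := hs₁σa (by omega); omega
          rcases le_or_gt (σb - b + 2) 1 with hν | hν
          · -- nq ≥ np ≥ 1 : W ≥ (b-2) + (t-b+1) = t-1 ; need W ≥ σt - ... 
            nlinarith [mul_nonneg (by omega : (0:ℤ) ≤ np - 1) (by omega : (0:ℤ) ≤ (t-a) - (t-b+1)),
              mul_nonneg (by omega : (0:ℤ) ≤ nq - np) (by omega : (0:ℤ) ≤ t - b + 1)]
          · nlinarith [mul_nonneg (by omega : (0:ℤ) ≤ np - 1) (by omega : (0:ℤ) ≤ (t-a) - (t-b+1)),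
              mul_nonneg (by omega : (0:ℤ) ≤ nq - np) (by omega : (0:ℤ) ≤ t - b + 1),
              mul_nonneg (by omega : (0:ℤ) ≤ nq - (σb - b + 2)) (by omega : (0:ℤ) ≤ t - b + 1),
              mul_nonneg (by omega : (0:ℤ) ≤ σb - b + 2 - 1) (by omega : (0:ℤ) ≤ t - b)]
  · -- a ≥ 2
    rw [hBa2 haa] at hW
    have hbb : 2 ≤ b := by omega
    rw [hBb2 hbb] at hW
    have h1 : σa ≤ np := by rw [if_pos (by omega)] at hF1; omega
    -- W ≥ np(t-a+1) + (nq-np)(t-b+1) ≥ σa (t-a+1)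
    have hWa : σa * (t - a + 1) ≤ W := by
      nlinarith [mul_nonneg (by omega : (0:ℤ) ≤ np - σa) (by omega : (0:ℤ) ≤ t - a + 1),
        mul_nonneg (by omega : (0:ℤ) ≤ nq - np) (by omega : (0:ℤ) ≤ t - b + 1)]
    rcases le_or_gt σa 0 with hσ | hσ
    · have hs : s₁ = 0 := by have := hs₁σa (by omega); omega
      nlinarith []
    · nlinarith [mul_nonneg (by omega : (0:ℤ) ≤ σa - 1) (by omega : (0:ℤ) ≤ t - a)]

lemma endgameI (t a np nq nr σa σt s₁ Sr Ba mq W : ℤ)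
    (ht : 3 ≤ t) (ha0 : 0 ≤ a) (hat : a ≤ t)
    (hnp : 0 ≤ np) (hnq : 0 ≤ nq) (hnpr : np ≤ nr) (hnqr : nq ≤ nr)
    (hσa0 : 0 ≤ σa) (hσaa : σa ≤ a)
    (hs₁0 : 0 ≤ s₁) (hs₁1 : s₁ ≤ 1) (hs₁σa : 1 ≤ a → s₁ ≤ σa)
    (hσt : σt ≤ σa + (t - a)) (hsum : s₁ + Sr = σt)
    (hF1 : σa + 1 ≤ np + (if 1 ≤ a then 1 else 0))
    (hF2 : σa + 1 ≤ nq + mq)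
    (hmq0 : a = 0 → mq = 0) (hmq1 : 1 ≤ a → mq = a - 1)
    (hBa1 : a ≤ 1 → Ba = t - a) (hBa2 : 2 ≤ a → Ba = t - a + 1)
    (hW : nr * Ba ≤ W) :
    (t-1)*s₁ + Sr + 1 ≤ W + (t-1) := by
  rcases le_or_gt a 0 with ha | ha
  · -- a = 0
    have ha : a = 0 := by omega
    rw [hBa1 (by omega)] at hW
    have h1 : 1 ≤ nq := by have := hmq0 ha; omega
    have h2 : 1 ≤ nr := by omega
    nlinarith [mul_nonneg (by omega : (0:ℤ) ≤ nr - 1) (by omega : (0:ℤ) ≤ t - a)]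
  · rcases le_or_gt a 1 with haa | haa
    · -- a = 1
      have ha1 : a = 1 := by omega
      rw [hBa1 (by omega)] at hW
      have h1 : s₁ + 1 ≤ nq := by have := hmq1 (by omega); have := hs₁σa (by omega); omega
      nlinarith [mul_nonneg (by omega : (0:ℤ) ≤ nr - s₁ - 1) (by omega : (0:ℤ) ≤ t - a)]
    · -- a ≥ 2
      rw [hBa2 haa] at hW
      have h1 : σa ≤ np := by rw [if_pos (by omega)] at hF1; omega
      have hWa : σa * (t - a + 1) ≤ W := by
        nlinarith [mul_nonneg (by omega : (0:ℤ) ≤ nr - σa) (by omega : (0:ℤ) ≤ t - a + 1)]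
      rcases le_or_gt σa 0 with hσ | hσ
      · have hs : s₁ = 0 := by have := hs₁σa (by omega); omega
        nlinarith []
      · nlinarith [mul_nonneg (by omega : (0:ℤ) ≤ σa - 1) (by omega : (0:ℤ) ≤ t - a)]

lemma endgameIII (t a b np nq σa σb σt s₁ Sr Ba Bb mb W : ℤ)
    (ht : 3 ≤ t) (hb0 : 0 ≤ b) (hab : b < a) (hat : a ≤ t)
    (hnq : 0 ≤ nq) (hnqp : nq ≤ np)
    (hσa0 : 0 ≤ σa) (hσaa : σa ≤ a) (hσb0 : 0 ≤ σb)
    (hs₁0 : 0 ≤ s₁) (hs₁1 : s₁ ≤ 1) (hs₁σa : 1 ≤ a → s₁ ≤ σa)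
    (hσt : σt ≤ σa + (t - a)) (hsum : s₁ + Sr = σt)
    (hF1 : σa + 1 ≤ np + (if 1 ≤ a then 1 else 0))
    (hF2 : σb + 1 ≤ nq + mb)
    (hmb0 : b = 0 → mb = 0) (hmb1 : 1 ≤ b → mb = b - 1)
    (hBa1 : a ≤ 1 → Ba = t - a) (hBa2 : 2 ≤ a → Ba = t - a + 1)
    (hBb1 : b ≤ 1 → Bb = t - b) (hBb2 : 2 ≤ b → Bb = t - b + 1)
    (hW : nq * Bb + (np - nq) * Ba ≤ W) :
    (t-1)*s₁ + Sr + 1 ≤ W + (t-1) := by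
  have ha1 : 1 ≤ a := by omega
  have h1 : σa ≤ np := by rw [if_pos (by omega)] at hF1; omega
  have hBab : Ba ≤ Bb := by
    rcases le_or_gt a 1 with h | h
    · rw [hBa1 h, hBb1 (by omega)]; omega
    · rcases le_or_gt b 1 with h' | h'
      · rw [hBa2 h, hBb1 h']; omega
      · rw [hBa2 h, hBb2 (by omega)]; omega
  rcases le_or_gt a 1 with haa | haa
  · -- a = 1, b = 0
    have ha : a = 1 := by omega
    have hb : b = 0 := by omega
    rw [hBa1 haa] at hW hBab
    rw [hBb1 (by omega)] at hW hBab
    have h2 : 1 ≤ nq := by have := hmb0 hb; omega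
    nlinarith [mul_nonneg (by omega : (0:ℤ) ≤ np - 1) (by omega : (0:ℤ) ≤ t - a),
      mul_nonneg (by omega : (0:ℤ) ≤ nq - 1) (by omega : (0:ℤ) ≤ (t-b) - (t-a))]
  · -- a ≥ 2
    rw [hBa2 haa] at hW hBab
    have hWa : σa * (t - a + 1) ≤ W := by
      nlinarith [mul_nonneg hnq (by omega : (0:ℤ) ≤ Bb - (t - a + 1)),
        mul_nonneg (by omega : (0:ℤ) ≤ np - σa) (by omega : (0:ℤ) ≤ t - a + 1)]
    rcases le_or_gt σa 0 with hσ | hσ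
    · have hs : s₁ = 0 := by have := hs₁σa (by omega); omega
      nlinarith []
    · nlinarith [mul_nonneg (by omega : (0:ℤ) ≤ σa - 1) (by omega : (0:ℤ) ≤ t - a)]

lemma core {n : ℕ} {t : ℕ} (ht : 3 ≤ t) {e : ℕ → Fin n} {C₀ : Finset (Fin n)}
    (hmono : StrictMonoOn e (Set.Icc 1 t))
    (hout : ∀ ℓ ∈ Finset.Icc 1 t, e ℓ ∉ C₀)
    {S : Finset (Fin n)} (hS : S ⊆ C₀ ∪ (Finset.Icc 1 t).image e)
    (hd1 : ¬ Dominates S (insert (e 1) C₀))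
    (hd2 : ¬ Dominates S (C₀ ∪ (Finset.Icc 2 t).image e)) :
    (∑ i ∈ S, al t e i) + 1 ≤ (∑ i ∈ C₀, al t e i) + ((t:ℤ) - 1) := by
  classical
  -- basic monotonicity helpers
  have hlt : ∀ k l : ℕ, 1 ≤ k → k < l → l ≤ t → e k < e l := fun k l h1 h2 h3 =>
    hmono ⟨h1, by omega⟩ ⟨by omega, h3⟩ h2
  have hle : ∀ k l : ℕ, 1 ≤ k → k ≤ l → l ≤ t → e k ≤ e l := by
    intro k l h1 h2 h3
    rcases eq_or_lt_of_le h2 with rfl | h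
    · exact le_rfl
    · exact (hlt k l h1 h h3).le
  have hinj : ∀ k l : ℕ, 1 ≤ k → k ≤ t → 1 ≤ l → l ≤ t → e k = e l → k = l := by
    intro k l hk1 hk2 hl1 hl2 hkl
    by_contra hne
    rcases Nat.lt_or_ge k l with h | h
    · exact absurd hkl (ne_of_lt (hlt k l hk1 h hl2))
    · have : l < k := by omega
      exact absurd hkl.symm (ne_of_lt (hlt l k hl1 this hk2))
  have houtE : ∀ ℓ : ℕ, 1 ≤ ℓ → ℓ ≤ t → e ℓ ∉ C₀ := fun ℓ h1 h2 =>
    hout ℓ (Finset.mem_Icc.mpr ⟨h1, h2⟩)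
  -- violations
  obtain ⟨p, hp⟩ : ∃ p, (S.filter (· ≤ p)).card < ((insert (e 1) C₀).filter (· ≤ p)).card := by
    by_contra hc
    push_neg at hc
    exact hd1 (hall_dominates fun r => hc r)
  obtain ⟨q, hq⟩ : ∃ q, (S.filter (· ≤ q)).card
      < ((C₀ ∪ (Finset.Icc 2 t).image e).filter (· ≤ q)).card := by
    by_contra hc
    push_neg at hc
    exact hd2 (hall_dominates fun r => hc r)
  -- counting functions
  set cnt : Fin n → ℕ := fun r => ((Finset.Icc 1 t).filter (fun ℓ => e ℓ ≤ r)).card with hcnt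
  set σc : ℕ → ℕ := fun k => ((Finset.Icc 1 k).filter (fun ℓ => e ℓ ∈ S)).card with hσc
  set M : Finset (Fin n) := C₀ \ S with hM
  set W : ℤ := ∑ i ∈ M, al t e i with hW
  have hcnt_le : ∀ r, cnt r ≤ t := by
    intro r
    calc cnt r ≤ (Finset.Icc 1 t).card := Finset.card_filter_le _ _
      _ = t := by rw [Nat.card_Icc]; omega
  have hK : ∀ r : Fin n, ∀ ℓ : ℕ, 1 ≤ ℓ → ℓ ≤ t → (e ℓ ≤ r ↔ ℓ ≤ cnt r) := by
    intro r ℓ h1 h2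
    have hfe := filter_Icc_eq t (fun ℓ => e ℓ ≤ r)
      (fun k l hk1 hkl hlt' hPl => le_trans (hle k l hk1 hkl hlt') hPl)
    constructor
    · intro h
      have : ℓ ∈ (Finset.Icc 1 t).filter (fun ℓ => e ℓ ≤ r) :=
        Finset.mem_filter.mpr ⟨Finset.mem_Icc.mpr ⟨h1, h2⟩, h⟩
      rw [hfe, Finset.mem_Icc] at this
      exact this.2
    · intro h
      have : ℓ ∈ (Finset.Icc 1 t).filter (fun ℓ => e ℓ ≤ r) := by
        rw [hfe, Finset.mem_Icc]
        exact ⟨h1, h⟩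
      exact (Finset.mem_filter.mp this).2
  -- decomposition of S and C₀
  have hSdec : S = (C₀ ∩ S) ∪ (S ∩ ((Finset.Icc 1 t).image e)) := by
    ext i
    simp only [Finset.mem_union, Finset.mem_inter]
    constructor
    · intro hi
      rcases Finset.mem_union.mp (hS hi) with h | h
      · exact Or.inl ⟨h, hi⟩
      · exact Or.inr ⟨hi, h⟩
    · rintro (⟨_, h⟩ | ⟨h, _⟩) <;> exact h
  have hC₀dec : C₀ = (C₀ ∩ S) ∪ M := by
    ext i
    simp only [hM, Finset.mem_union, Finset.mem_inter, Finset.mem_sdiff]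
    by_cases h : i ∈ S <;> tauto
  have hdisj1 : Disjoint (C₀ ∩ S) (S ∩ ((Finset.Icc 1 t).image e)) := by
    rw [Finset.disjoint_left]
    rintro i hi hi'
    obtain ⟨ℓ, hℓ, rfl⟩ := Finset.mem_image.mp (Finset.mem_inter.mp hi').2
    rw [Finset.mem_Icc] at hℓ
    exact houtE ℓ hℓ.1 hℓ.2 (Finset.mem_inter.mp hi).1
  have hdisj2 : Disjoint (C₀ ∩ S) M := by
    rw [Finset.disjoint_left]
    rintro i hi hi'
    exact (Finset.mem_sdiff.mp hi').2 (Finset.mem_inter.mp hi).2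
  -- S-filter cardinality
  have hScard : ∀ r : Fin n, (S.filter (· ≤ r)).card
      = ((C₀ ∩ S).filter (· ≤ r)).card + σc (cnt r) := by
    intro r
    conv_lhs => rw [hSdec]
    rw [Finset.filter_union, Finset.card_union_of_disjoint
      (Finset.disjoint_filter_filter hdisj1)]
    congr 1
    have himg : (S ∩ ((Finset.Icc 1 t).image e)).filter (· ≤ r)
        = ((Finset.Icc 1 t).filter (fun ℓ => e ℓ ∈ S ∧ e ℓ ≤ r)).image e := by
      ext i
      simp only [Finset.mem_filter, Finset.mem_inter, Finset.mem_image, Finset.mem_Icc]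
      constructor
      · rintro ⟨⟨hiS, ⟨ℓ, hℓ, rfl⟩⟩, hir⟩
        exact ⟨ℓ, ⟨hℓ, hiS, hir⟩, rfl⟩
      · rintro ⟨ℓ, ⟨hℓ, hiS, hir⟩, rfl⟩
        exact ⟨⟨hiS, ⟨ℓ, hℓ, rfl⟩⟩, hir⟩
    rw [himg, Finset.card_image_of_injOn (fun x hx y hy hxy => by
      rw [Finset.mem_coe, Finset.mem_filter, Finset.mem_Icc] at hx hy
      exact hinj x y hx.1.1 hx.1.2 hy.1.1 hy.1.2 hxy)]
    congr 1
    ext ℓ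
    simp only [Finset.mem_filter, Finset.mem_Icc]
    constructor
    · rintro ⟨⟨h1, h2⟩, h3, h4⟩
      exact ⟨⟨h1, (hK r ℓ h1 h2).mp h4⟩, h3⟩
    · rintro ⟨⟨h1, h2⟩, h3⟩
      have h2t : ℓ ≤ t := le_trans h2 (hcnt_le r)
      exact ⟨⟨h1, h2t⟩, h3, (hK r ℓ h1 h2t).mpr h2⟩
  -- C₀-filter cardinality
  have hC₀card : ∀ r : Fin n, (C₀.filter (· ≤ r)).card
      = ((C₀ ∩ S).filter (· ≤ r)).card + (M.filter (· ≤ r)).card := by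
    intro r
    conv_lhs => rw [hC₀dec]
    rw [Finset.filter_union, Finset.card_union_of_disjoint
      (Finset.disjoint_filter_filter hdisj2)]
  -- violation 1 processed
  set a : ℕ := cnt p with ha
  set b : ℕ := cnt q with hb
  set np : ℕ := (M.filter (· ≤ p)).card with hnp
  set nq : ℕ := (M.filter (· ≤ q)).card with hnq
  have hF1 : σc a + 1 ≤ np + (if 1 ≤ a then 1 else 0) := by
    have hins : ((insert (e 1) C₀).filter (· ≤ p)).card
        = (C₀.filter (· ≤ p)).card + (if 1 ≤ a then 1 else 0) := by
      rw [Finset.filter_insert]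
      by_cases h : e 1 ≤ p
      · rw [if_pos h, if_pos ((hK p 1 le_rfl (by omega)).mp h),
          Finset.card_insert_of_notMem]
        intro hmem
        exact houtE 1 le_rfl (by omega) (Finset.mem_filter.mp hmem).1
      · rw [if_neg h, if_neg]
        · omega
        · intro h1a
          exact h ((hK p 1 le_rfl (by omega)).mpr h1a)
    rw [hins, hC₀card p, hScard p, ← ha] at hp
    rcases le_or_gt 1 a with h1a | h1a
    · rw [if_pos h1a] at hp ⊢
      omega
    · rw [if_neg (by omega)] at hp ⊢
      omega
  -- violation 2 processed
  have hF2 : σc b + 1 ≤ nq + (Finset.Icc 2 b).card := by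
    have hun : ((C₀ ∪ (Finset.Icc 2 t).image e).filter (· ≤ q)).card
        = (C₀.filter (· ≤ q)).card + (Finset.Icc 2 b).card := by
      rw [Finset.filter_union, Finset.card_union_of_disjoint]
      · congr 1
        have himg : (((Finset.Icc 2 t).image e)).filter (· ≤ q)
            = ((Finset.Icc 2 t).filter (fun ℓ => e ℓ ≤ q)).image e := by
          ext i
          simp only [Finset.mem_filter, Finset.mem_image, Finset.mem_Icc]
          constructor
          · rintro ⟨⟨ℓ, hℓ, rfl⟩, hir⟩
            exact ⟨ℓ, ⟨hℓ, hir⟩, rfl⟩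
          · rintro ⟨ℓ, ⟨hℓ, hir⟩, rfl⟩
            exact ⟨⟨ℓ, hℓ, rfl⟩, hir⟩
        rw [himg, Finset.card_image_of_injOn (fun x hx y hy hxy => by
          rw [Finset.mem_coe, Finset.mem_filter, Finset.mem_Icc] at hx hy
          exact hinj x y (by omega) hx.1.2 (by omega) hy.1.2 hxy)]
        congr 1
        ext ℓ
        simp only [Finset.mem_filter, Finset.mem_Icc]
        constructor
        · rintro ⟨⟨h1, h2⟩, h3⟩
          exact ⟨h1, (hK q ℓ (by omega) h2).mp h3⟩
        · rintro ⟨h1, h2⟩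
          have h2t : ℓ ≤ t := le_trans h2 (hcnt_le q)
          exact ⟨⟨h1, h2t⟩, (hK q ℓ (by omega) h2t).mpr h2⟩
      · rw [Finset.disjoint_left]
        rintro i hi hi'
        obtain ⟨ℓ, hℓ, rfl⟩ := Finset.mem_image.mp (Finset.mem_filter.mp hi').1
        rw [Finset.mem_Icc] at hℓ
        exact houtE ℓ (by omega) hℓ.2 (Finset.mem_filter.mp hi).1
    rw [hun, hC₀card q, hScard q, ← hb] at hq
    omega
  -- σ properties
  have hat : a ≤ t := by rw [ha]; exact hcnt_le p
  have hbt : b ≤ t := by rw [hb]; exact hcnt_le q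
  have hσle : ∀ k, σc k ≤ k := by
    intro k
    calc σc k ≤ (Finset.Icc 1 k).card := Finset.card_filter_le _ _
      _ = k := by rw [Nat.card_Icc]; omega
  have hσlip : ∀ k l : ℕ, k ≤ l → σc l ≤ σc k + (l - k) := by
    intro k l hkl
    have hsub : (Finset.Icc 1 l).filter (fun ℓ => e ℓ ∈ S)
        ⊆ ((Finset.Icc 1 k).filter (fun ℓ => e ℓ ∈ S)) ∪ Finset.Icc (k+1) l := by
      intro ℓ hℓ
      rw [Finset.mem_filter, Finset.mem_Icc] at hℓ
      rw [Finset.mem_union, Finset.mem_filter, Finset.mem_Icc, Finset.mem_Icc]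
      rcases le_or_gt ℓ k with h | h
      · exact Or.inl ⟨⟨hℓ.1.1, h⟩, hℓ.2⟩
      · exact Or.inr ⟨by omega, hℓ.1.2⟩
    calc σc l ≤ (((Finset.Icc 1 k).filter (fun ℓ => e ℓ ∈ S)) ∪ Finset.Icc (k+1) l).card :=
          Finset.card_le_card hsub
      _ ≤ ((Finset.Icc 1 k).filter (fun ℓ => e ℓ ∈ S)).card + (Finset.Icc (k+1) l).card :=
          Finset.card_union_le _ _
      _ ≤ σc k + (l - k) := by simp only [hσc]; rw [Nat.card_Icc]; omega
  have hs₁σ : ∀ k, 1 ≤ k → (if e 1 ∈ S then 1 else 0) ≤ σc k := by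
    intro k hk
    by_cases h : e 1 ∈ S
    · rw [if_pos h]
      exact Finset.card_pos.mpr ⟨1, Finset.mem_filter.mpr ⟨Finset.mem_Icc.mpr ⟨le_rfl, hk⟩, h⟩⟩
    · rw [if_neg h]; omega
  -- al values at the e-points
  have hale1 : al t e (e 1) = (t:ℤ) - 1 := by
    have hne : e 1 ∉ (Finset.Icc 2 t).image e := by
      intro hmem
      obtain ⟨ℓ, hℓ, hℓe⟩ := Finset.mem_image.mp hmem
      rw [Finset.mem_Icc] at hℓ
      have := hinj ℓ 1 (by omega) hℓ.2 le_rfl (by omega) hℓe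
      omega
    rw [al, if_neg hne, if_neg (lt_irrefl _)]
    have hfull : (Finset.Icc 3 t).filter (fun ℓ => e 1 < e ℓ) = Finset.Icc 3 t :=
      Finset.filter_true_of_mem (fun ℓ hℓ => by
        rw [Finset.mem_Icc] at hℓ
        exact hlt 1 ℓ le_rfl (by omega) hℓ.2)
    rw [hfull, Nat.card_Icc]
    have hcast : ((t + 1 - 3 : ℕ) : ℤ) = (t:ℤ) - 2 := by omega
    rw [hcast]; ring
  have haleℓ : ∀ ℓ, 2 ≤ ℓ → ℓ ≤ t → al t e (e ℓ) = 1 := by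
    intro ℓ h2 hℓt
    rw [al, if_pos (Finset.mem_image.mpr ⟨ℓ, Finset.mem_Icc.mpr ⟨h2, hℓt⟩, rfl⟩)]
  have hIcc1t : Finset.Icc 1 t = insert 1 (Finset.Icc 2 t) := by
    ext ℓ
    simp only [Finset.mem_insert, Finset.mem_Icc]
    omega
  -- sum decomposition of S
  have hsum_split : ∑ i ∈ S, al t e i = (∑ i ∈ C₀ ∩ S, al t e i)
      + (((t:ℤ) - 1) * (if e 1 ∈ S then 1 else 0)
        + (((Finset.Icc 2 t).filter (fun ℓ => e ℓ ∈ S)).card : ℤ)) := by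
    conv_lhs => rw [hSdec]
    rw [Finset.sum_union hdisj1]
    congr 1
    have himg : S ∩ ((Finset.Icc 1 t).image e)
        = ((Finset.Icc 1 t).filter (fun ℓ => e ℓ ∈ S)).image e := by
      ext i
      simp only [Finset.mem_inter, Finset.mem_image, Finset.mem_filter, Finset.mem_Icc]
      constructor
      · rintro ⟨hiS, ⟨ℓ, hℓ, rfl⟩⟩
        exact ⟨ℓ, ⟨hℓ, hiS⟩, rfl⟩
      · rintro ⟨ℓ, ⟨hℓ, hiS⟩, rfl⟩
        exact ⟨hiS, ⟨ℓ, hℓ, rfl⟩⟩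
    rw [himg, Finset.sum_image (fun x hx y hy hxy => by
      rw [Finset.mem_coe, Finset.mem_filter, Finset.mem_Icc] at hx hy
      exact hinj x y hx.1.1 hx.1.2 hy.1.1 hy.1.2 hxy)]
    have hconst : ∑ ℓ ∈ (Finset.Icc 2 t).filter (fun ℓ => e ℓ ∈ S), al t e (e ℓ)
        = (((Finset.Icc 2 t).filter (fun ℓ => e ℓ ∈ S)).card : ℤ) :=
      calc ∑ ℓ ∈ (Finset.Icc 2 t).filter (fun ℓ => e ℓ ∈ S), al t e (e ℓ)
          = ∑ _ℓ ∈ (Finset.Icc 2 t).filter (fun ℓ => e ℓ ∈ S), (1:ℤ) :=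
            Finset.sum_congr rfl (fun ℓ hℓ => by
              rw [Finset.mem_filter, Finset.mem_Icc] at hℓ
              exact haleℓ ℓ hℓ.1.1 hℓ.1.2)
        _ = (((Finset.Icc 2 t).filter (fun ℓ => e ℓ ∈ S)).card : ℤ) := by
            rw [Finset.sum_const, nsmul_eq_mul, mul_one]
    rw [hIcc1t, Finset.filter_insert]
    by_cases h : e 1 ∈ S
    · rw [if_pos h, Finset.sum_insert (by
        intro hmem
        rw [Finset.mem_filter, Finset.mem_Icc] at hmem
        omega), hale1, hconst, if_pos h]
      ring
    · rw [if_neg h, hconst, if_neg h]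
      ring
  -- sum decomposition of C₀
  have hsum_C₀ : ∑ i ∈ C₀, al t e i = (∑ i ∈ C₀ ∩ S, al t e i) + W := by
    conv_lhs => rw [hC₀dec]
    rw [Finset.sum_union hdisj2]
  -- σc t split
  have hσt_split : σc t = (if e 1 ∈ S then 1 else 0)
      + ((Finset.Icc 2 t).filter (fun ℓ => e ℓ ∈ S)).card := by
    simp only [hσc]
    rw [hIcc1t, Finset.filter_insert]
    by_cases h : e 1 ∈ S
    · rw [if_pos h, if_pos h, Finset.card_insert_of_notMem (by
        intro hmem
        rw [Finset.mem_filter, Finset.mem_Icc] at hmem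
        omega)]
      omega
    · rw [if_neg h, if_neg h]
      omega
  -- the lower-bound weight function
  set BB : ℕ → ℤ := fun c =>
    1 + (if c = 0 then 1 else 0) + (((Finset.Icc 3 t).filter (fun ℓ => c < ℓ)).card : ℤ)
    with hBB
  have hBBval1 : ∀ c : ℕ, c ≤ 1 → BB c = (t:ℤ) - c := by
    intro c hc
    have hfull : (Finset.Icc 3 t).filter (fun ℓ => c < ℓ) = Finset.Icc 3 t :=
      Finset.filter_true_of_mem (fun ℓ hℓ => by rw [Finset.mem_Icc] at hℓ; omega)
    simp only [hBB]
    rw [hfull, Nat.card_Icc]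
    rcases Nat.le_one_iff_eq_zero_or_eq_one.mp hc with rfl | rfl
    · rw [if_pos rfl]; omega
    · rw [if_neg (by omega)]; omega
  have hBBval2 : ∀ c : ℕ, 2 ≤ c → c ≤ t → BB c = (t:ℤ) - c + 1 := by
    intro c h2 hct
    have heq : (Finset.Icc 3 t).filter (fun ℓ => c < ℓ) = Finset.Icc (c+1) t := by
      ext ℓ
      simp only [Finset.mem_filter, Finset.mem_Icc]
      omega
    simp only [hBB]
    rw [heq, if_neg (by omega), Nat.card_Icc]
    omega
  -- weight lower bound for elements of M below a threshold
  have halM : ∀ r : Fin n, ∀ i ∈ M, i ≤ r → BB (cnt r) ≤ al t e i := by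
    intro r i hiM hir
    have hiC₀ : i ∈ C₀ := (Finset.mem_sdiff.mp hiM).1
    have hipts : i ∉ (Finset.Icc 2 t).image e := by
      intro hmem
      obtain ⟨ℓ, hℓ, rfl⟩ := Finset.mem_image.mp hmem
      rw [Finset.mem_Icc] at hℓ
      exact houtE ℓ (by omega) hℓ.2 hiC₀
    rw [al, if_neg hipts]
    simp only [hBB]
    have h1 : (if cnt r = 0 then (1:ℤ) else 0) ≤ (if i < e 1 then 1 else 0) := by
      by_cases h : cnt r = 0
      · rw [if_pos h, if_pos]
        have hne1 : ¬ e 1 ≤ r := fun hh => by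
          have := (hK r 1 le_rfl (by omega)).mp hh
          omega
        exact lt_of_le_of_lt hir (not_le.mp hne1)
      · rw [if_neg h]
        split <;> norm_num
    have h2 : (((Finset.Icc 3 t).filter (fun ℓ => cnt r < ℓ)).card : ℤ)
        ≤ (((Finset.Icc 3 t).filter (fun ℓ => i < e ℓ)).card : ℤ) := by
      have hsub : (Finset.Icc 3 t).filter (fun ℓ => cnt r < ℓ)
          ⊆ (Finset.Icc 3 t).filter (fun ℓ => i < e ℓ) := by
        intro ℓ hℓ
        rw [Finset.mem_filter, Finset.mem_Icc] at hℓ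
        rw [Finset.mem_filter, Finset.mem_Icc]
        refine ⟨⟨hℓ.1.1, hℓ.1.2⟩, ?_⟩
        have hner : ¬ e ℓ ≤ r := fun hh => by
          have := (hK r ℓ (by omega) hℓ.1.2).mp hh
          omega
        exact lt_of_le_of_lt hir (not_le.mp hner)
      exact_mod_cast Finset.card_le_card hsub
    linarith
  -- pair-threshold lower bound on W
  have hpairW : ∀ r₁ r₂ : Fin n, r₁ ≤ r₂ →
      ((M.filter (· ≤ r₁)).card : ℤ) * BB (cnt r₁)
        + (((M.filter (· ≤ r₂)).card : ℤ) - ((M.filter (· ≤ r₁)).card : ℤ)) * BB (cnt r₂)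
        ≤ W := by
    intro r₁ r₂ h12
    have hsub : M.filter (· ≤ r₁) ⊆ M.filter (· ≤ r₂) := by
      intro i hi
      rw [Finset.mem_filter] at hi
      rw [Finset.mem_filter]
      exact ⟨hi.1, le_trans hi.2 h12⟩
    have hWge : ∑ i ∈ M.filter (· ≤ r₂), al t e i ≤ W :=
      Finset.sum_le_sum_of_subset_of_nonneg (Finset.filter_subset _ _)
        (fun i _ _ => al_nonneg t e i)
    have hsdiff : ∑ i ∈ (M.filter (· ≤ r₂)) \ (M.filter (· ≤ r₁)), al t e i
        + ∑ i ∈ M.filter (· ≤ r₁), al t e i = ∑ i ∈ M.filter (· ≤ r₂), al t e i :=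
      Finset.sum_sdiff hsub
    have hb1 : ((M.filter (· ≤ r₁)).card : ℤ) * BB (cnt r₁)
        ≤ ∑ i ∈ M.filter (· ≤ r₁), al t e i := by
      have hx := Finset.card_nsmul_le_sum (M.filter (· ≤ r₁)) (al t e) (BB (cnt r₁))
        (fun i hi => by
          rw [Finset.mem_filter] at hi
          exact halM r₁ i hi.1 hi.2)
      rwa [nsmul_eq_mul] at hx
    have hb2 : (((M.filter (· ≤ r₂)).card : ℤ) - ((M.filter (· ≤ r₁)).card : ℤ)) * BB (cnt r₂)
        ≤ ∑ i ∈ (M.filter (· ≤ r₂)) \ (M.filter (· ≤ r₁)), al t e i := by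
      have hcard : ((((M.filter (· ≤ r₂)) \ (M.filter (· ≤ r₁))).card) : ℤ)
          = ((M.filter (· ≤ r₂)).card : ℤ) - ((M.filter (· ≤ r₁)).card : ℤ) := by
        rw [Finset.card_sdiff_of_subset hsub]
        have := Finset.card_le_card hsub
        omega
      have hx := Finset.card_nsmul_le_sum ((M.filter (· ≤ r₂)) \ (M.filter (· ≤ r₁)))
        (al t e) (BB (cnt r₂)) (fun i hi => by
          have hi' := (Finset.mem_sdiff.mp hi).1
          rw [Finset.mem_filter] at hi'
          exact halM r₂ i hi'.1 hi'.2)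
      rw [nsmul_eq_mul, hcard] at hx
      exact hx
    linarith
  -- reduce the goal
  rw [hsum_split, hsum_C₀]
  have main : ((t:ℤ) - 1) * (if e 1 ∈ S then 1 else 0)
      + (((Finset.Icc 2 t).filter (fun ℓ => e ℓ ∈ S)).card : ℤ) + 1 ≤ W + ((t:ℤ) - 1) := by
    have hs₁0 : (0:ℤ) ≤ (if e 1 ∈ S then 1 else 0) := by split <;> norm_num
    have hs₁1 : (if e 1 ∈ S then (1:ℤ) else 0) ≤ 1 := by split <;> norm_num
    have hs₁σZ : ∀ k : ℕ, 1 ≤ k → (if e 1 ∈ S then (1:ℤ) else 0) ≤ (σc k : ℤ) := by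
      intro k hk
      have := hs₁σ k hk
      by_cases h : e 1 ∈ S
      · rw [if_pos h] at this ⊢
        exact_mod_cast this
      · rw [if_neg h]
        omega
    have hsumZ : (if e 1 ∈ S then (1:ℤ) else 0)
        + (((Finset.Icc 2 t).filter (fun ℓ => e ℓ ∈ S)).card : ℤ) = (σc t : ℤ) := by
      rw [hσt_split]
      by_cases h : e 1 ∈ S
      · rw [if_pos h, if_pos h]; push_cast; ring
      · rw [if_neg h, if_neg h]; push_cast; ring
    have hF1Z : (σc a : ℤ) + 1 ≤ (np : ℤ) + (if (1:ℤ) ≤ (a:ℤ) then 1 else 0) := by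
      rcases le_or_gt 1 a with h | h
      · rw [if_pos h] at hF1
        rw [if_pos (by exact_mod_cast h)]
        push_cast
        omega
      · rw [if_neg (by omega)] at hF1
        rw [if_neg (by exact_mod_cast (by omega : ¬ (1 ≤ a)))]
        push_cast
        omega
    rcases lt_trichotomy a b with hab | hab | hab
    · -- Case II : a < b
      have hb1 : 1 ≤ b := by omega
      have hpq : p ≤ q := by
        have h1' : e b ≤ q := (hK q b hb1 hbt).mpr (le_of_eq hb)
        have h2' : ¬ e b ≤ p := fun hh => by
          have := (hK p b hb1 hbt).mp hh
          rw [← ha] at this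
          omega
        exact le_of_lt (lt_of_lt_of_le (not_le.mp h2') h1')
      have hWb := hpairW p q hpq
      rw [← ha, ← hb] at hWb
      have hnpq : np ≤ nq := Finset.card_le_card (by
        intro i hi
        rw [Finset.mem_filter] at hi
        rw [Finset.mem_filter]
        exact ⟨hi.1, le_trans hi.2 hpq⟩)
      have hmq : (Finset.Icc 2 b).card = b - 1 := by rw [Nat.card_Icc]; omega
      refine endgameII (t:ℤ) (a:ℤ) (b:ℤ) (np:ℤ) (nq:ℤ) (σc a : ℤ) (σc b : ℤ) (σc t : ℤ)
        (if e 1 ∈ S then (1:ℤ) else 0) _ (BB a) (BB b) W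
        (by omega) (by omega) (by omega) (by omega)
        (by omega) (by omega)
        (by omega) (by have := hσle a; omega) (by omega) (by have := hσle b; omega)
        (by have := hσlip a b (by omega); omega)
        hs₁0 hs₁1
        (fun h => hs₁σZ a (by exact_mod_cast h)) (hs₁σZ b hb1)
        (by have := hσlip b t hbt; omega)
        hsumZ hF1Z
        (by rw [hmq] at hF2; omega)
        (by intro h; exact hBBval1 a (by exact_mod_cast h))
        (by intro h; rw [hBBval2 a (by exact_mod_cast h) hat])
        (by intro h; exact hBBval1 b (by exact_mod_cast h))
        (by intro h; rw [hBBval2 b (by exact_mod_cast h) hbt])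
        hWb
    · -- Case I : a = b
      have hcntr : cnt (max p q) = a := by
        rcases max_choice p q with h | h
        · rw [h, ← ha]
        · rw [h, ← hb, hab]
      have hWr := hpairW (max p q) (max p q) le_rfl
      rw [hcntr] at hWr
      have hWsingle : ((M.filter (· ≤ max p q)).card : ℤ) * BB a ≤ W := by linarith
      have hnpr : np ≤ (M.filter (· ≤ max p q)).card := Finset.card_le_card (by
        intro i hi
        rw [Finset.mem_filter] at hi
        rw [Finset.mem_filter]
        exact ⟨hi.1, le_trans hi.2 (le_max_left p q)⟩)
      have hnqr : nq ≤ (M.filter (· ≤ max p q)).card := Finset.card_le_card (by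
        intro i hi
        rw [Finset.mem_filter] at hi
        rw [Finset.mem_filter]
        exact ⟨hi.1, le_trans hi.2 (le_max_right p q)⟩)
      refine endgameI (t:ℤ) (a:ℤ) (np:ℤ) (nq:ℤ) ((M.filter (· ≤ max p q)).card : ℤ)
        (σc a : ℤ) (σc t : ℤ) (if e 1 ∈ S then (1:ℤ) else 0) _ (BB a)
        ((Finset.Icc 2 b).card : ℤ) W
        (by omega) (by omega) (by omega)
        (by omega) (by omega)
        (by omega) (by omega)
        (by omega) (by have := hσle a; omega)
        hs₁0 hs₁1 (fun h => hs₁σZ a (by exact_mod_cast h))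
        (by have := hσlip a t hat; omega)
        hsumZ hF1Z
        (by rw [hab] at hF1Z ⊢; omega)
        (by intro h; have hb0 : b = 0 := by omega
            rw [hb0]; simp)
        (by intro h; rw [Nat.card_Icc]; omega)
        (by intro h; exact hBBval1 a (by exact_mod_cast h))
        (by intro h; rw [hBBval2 a (by exact_mod_cast h) hat])
        hWsingle
    · -- Case III : b < a
      have ha1 : 1 ≤ a := by omega
      have hqp : q ≤ p := by
        have h1' : e a ≤ p := (hK p a ha1 hat).mpr (le_of_eq ha)
        have h2' : ¬ e a ≤ q := fun hh => by
          have := (hK q a ha1 hat).mp hh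
          rw [← hb] at this
          omega
        exact le_of_lt (lt_of_lt_of_le (not_le.mp h2') h1')
      have hWb := hpairW q p hqp
      rw [← ha, ← hb] at hWb
      have hnqp : nq ≤ np := Finset.card_le_card (by
        intro i hi
        rw [Finset.mem_filter] at hi
        rw [Finset.mem_filter]
        exact ⟨hi.1, le_trans hi.2 hqp⟩)
      refine endgameIII (t:ℤ) (a:ℤ) (b:ℤ) (np:ℤ) (nq:ℤ) (σc a : ℤ) (σc b : ℤ) (σc t : ℤ)
        (if e 1 ∈ S then (1:ℤ) else 0) _ (BB a) (BB b) ((Finset.Icc 2 b).card : ℤ) W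
        (by omega) (by omega) (by omega) (by omega)
        (by omega) (by omega)
        (by omega) (by have := hσle a; omega) (by omega)
        hs₁0 hs₁1 (fun h => hs₁σZ a (by exact_mod_cast h))
        (by have := hσlip a t hat; omega)
        hsumZ hF1Z
        (by have hmq : (Finset.Icc 2 b).card = b - 1 := by rw [Nat.card_Icc]; omega
            omega)
        (by intro h; have hb0 : b = 0 := by omega
            rw [hb0]; simp)
        (by intro h; rw [Nat.card_Icc]; omega)
        (by intro h; exact hBBval1 a (by exact_mod_cast h))
        (by intro h; rw [hBBval2 a (by exact_mod_cast h) hat])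
        (by intro h; exact hBBval1 b (by exact_mod_cast h))
        (by intro h; rw [hBBval2 b (by exact_mod_cast h) (by omega)])
        hWb
  linarith

end AuxMCI

/-- for covers `C₁ = C₀ ∪ {i₁}` and `C₂ = C₀ ∪ {i₂,…,i_t}` (with
`i₁ < … < i_t` outside `C₀`, encoded as `e 1 < … < e t`), `{C₁, C₂}` is a multi-cover
and the stated closed-form MCI is valid for `K`. -/
theorem example_mci_one_rest {m n : ℕ} (A : Fin m → Fin n → ℕ) (b : Fin m → ℕ)
    (hA : ColsOrdered A)
    (C₀ : Finset (Fin n)) (t : ℕ) (ht : 3 ≤ t)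
    (e : ℕ → Fin n) (hmono : StrictMonoOn e (Set.Icc 1 t))
    (hout : ∀ ℓ ∈ Finset.Icc 1 t, e ℓ ∉ C₀)
    (C₁ C₂ Cu : Finset (Fin n))
    (hC₁ : C₁ = insert (e 1) C₀)
    (hC₂ : C₂ = C₀ ∪ (Finset.Icc 2 t).image e)
    (hCu : Cu = C₁ ∪ C₂)
    (hcov1 : IsCover A b C₁) (hcov2 : IsCover A b C₂)
    (lhs : (Fin n → ℤ) → ℤ)
    (hlhs : ∀ x : Fin n → ℤ, lhs x =
      (∑ i ∈ Cu.filter (fun i => i < e 1), (t : ℤ) * x i) +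
      (∑ i ∈ Cu.filter (fun i => e 1 ≤ i ∧ i < e 2), ((t : ℤ) - 1) * x i) +
      (∑ ℓ ∈ Finset.Icc 3 t, ∑ i ∈ Cu.filter (fun i => e (ℓ - 1) < i ∧ i < e ℓ),
        ((t : ℤ) - (ℓ : ℤ) + 2) * x i) +
      (∑ ℓ ∈ Finset.Icc 2 t, x (e ℓ)) +
      (∑ i ∈ Cu.filter (fun i => e t < i), x i))
    (β : ℤ) (hβ : β = lhs (fun i => if i ∈ C₁ then 1 else 0) - 1) :
    MultiCover A b ![C₁, C₂] ∧
    ∀ x : Fin n → ℤ, (∀ i, x i = 0 ∨ x i = 1) →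
      (∀ j, ∑ i, (A j i : ℤ) * x i ≤ (b j : ℤ)) → lhs x ≤ β := by
  classical
  have hlt : ∀ k l : ℕ, 1 ≤ k → k < l → l ≤ t → e k < e l := fun k l h1 h2 h3 =>
    hmono ⟨h1, by omega⟩ ⟨by omega, h3⟩ h2
  have hinj : ∀ k l : ℕ, 1 ≤ k → k ≤ t → 1 ≤ l → l ≤ t → e k = e l → k = l := by
    intro k l hk1 hk2 hl1 hl2 hkl
    by_contra hne
    rcases Nat.lt_or_ge k l with h | h
    · exact absurd hkl (ne_of_lt (hlt k l hk1 h hl2))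
    · have hlk : l < k := by omega
      exact absurd hkl.symm (ne_of_lt (hlt l k hl1 hlk hk2))
  have hout' : ∀ ℓ : ℕ, 1 ≤ ℓ → ℓ ≤ t → e ℓ ∉ C₀ := fun ℓ h1 h2 =>
    hout ℓ (Finset.mem_Icc.mpr ⟨h1, h2⟩)
  have hCuEq : Cu = C₀ ∪ (Finset.Icc 1 t).image e := by
    rw [hCu, hC₁, hC₂]
    ext i
    simp only [Finset.mem_union, Finset.mem_insert, Finset.mem_image, Finset.mem_Icc]
    constructor
    · rintro ((rfl | h) | (h | ⟨ℓ, hℓ, rfl⟩))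
      · exact Or.inr ⟨1, ⟨le_rfl, by omega⟩, rfl⟩
      · exact Or.inl h
      · exact Or.inl h
      · exact Or.inr ⟨ℓ, ⟨by omega, hℓ.2⟩, rfl⟩
    · rintro (h | ⟨ℓ, hℓ, rfl⟩)
      · exact Or.inl (Or.inr h)
      · rcases eq_or_lt_of_le hℓ.1 with h1 | h1
        · exact Or.inl (Or.inl (by rw [← h1]))
        · exact Or.inr (Or.inr ⟨ℓ, ⟨h1, hℓ.2⟩, rfl⟩)
  have hC₁sub : C₁ ⊆ Cu := by rw [hCu]; exact Finset.subset_union_left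
  have hpts_sub : (Finset.Icc 2 t).image e ⊆ Cu := by
    rw [hCu, hC₂]
    intro i hi
    exact Finset.mem_union_right _ (Finset.mem_union_right _ hi)
  have hinter : interC ![C₁, C₂] = C₁ ∩ C₂ := by
    have huniv : (Finset.univ : Finset (Fin 2)) = {0, 1} := by decide
    rw [interC, huniv, Finset.inf_insert, Finset.inf_singleton]
    simp [Matrix.cons_val_zero, Matrix.cons_val_one, Matrix.head_cons]
  have hunion : unionC ![C₁, C₂] = C₁ ∪ C₂ := by
    have huniv : (Finset.univ : Finset (Fin 2)) = {0, 1} := by decide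
    rw [unionC, huniv, Finset.sup_insert, Finset.sup_singleton]
    simp [Matrix.cons_val_zero, Matrix.cons_val_one, Matrix.head_cons]
  constructor
  · -- part (a) : multi-cover
    constructor
    · intro h
      fin_cases h
      · simpa using hcov1
      · simpa using hcov2
    · intro T hT _
      by_cases h1T : e 1 ∈ T
      · refine ⟨0, Or.inl ⟨id, Set.injOn_id _, ?_⟩⟩
        intro i hi
        simp only [Matrix.cons_val_zero] at hi
        rw [hinter, Finset.mem_sdiff, Finset.mem_inter] at hi
        have hi1 : i ∈ insert (e 1) C₀ := by rw [← hC₁]; exact hi.1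
        have hie1 : i = e 1 := by
          rcases Finset.mem_insert.mp hi1 with h | h
          · exact h
          · exact absurd ⟨hi.1, by rw [hC₂]; exact Finset.mem_union_left _ h⟩ hi.2
        rw [hie1]
        exact ⟨h1T, le_rfl⟩
      · refine ⟨1, Or.inr ⟨id, Set.injOn_id _, ?_⟩⟩
        intro i hi
        refine ⟨?_, le_rfl⟩
        have hi' := hT hi
        rw [hunion, hinter, Finset.mem_sdiff, Finset.mem_union] at hi'
        simp only [Matrix.cons_val_one, Matrix.head_cons]
        rw [hinter, Finset.mem_sdiff]
        refine ⟨?_, hi'.2⟩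
        rcases hi'.1 with h | h
        · have h1 : i ∈ insert (e 1) C₀ := by rw [← hC₁]; exact h
          rcases Finset.mem_insert.mp h1 with rfl | h'
          · exact absurd hi h1T
          · rw [hC₂]; exact Finset.mem_union_left _ h'
        · exact h
  · -- part (b) : validity
    intro x hx01 hxb
    have hinjpts : ∀ k ∈ Finset.Icc 2 t, ∀ l ∈ Finset.Icc 2 t, e k = e l → k = l := by
      intro k hk l hl hkl
      rw [Finset.mem_Icc] at hk hl
      exact hinj k l (by omega) hk.2 (by omega) hl.2 hkl
    have hlhs_al : ∀ y : Fin n → ℤ, lhs y = ∑ i ∈ Cu, al t e i * y i := by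
      intro y
      rw [hlhs y]
      have g1 : ∑ i ∈ Cu.filter (fun i => i < e 1), (t:ℤ) * y i
          = ∑ i ∈ Cu, (if i < e 1 then (t:ℤ) * y i else 0) := Finset.sum_filter _ _
      have g2 : ∑ i ∈ Cu.filter (fun i => e 1 ≤ i ∧ i < e 2), ((t:ℤ) - 1) * y i
          = ∑ i ∈ Cu, (if e 1 ≤ i ∧ i < e 2 then ((t:ℤ) - 1) * y i else 0) :=
        Finset.sum_filter _ _
      have g3 : ∑ ℓ ∈ Finset.Icc 3 t,
            ∑ i ∈ Cu.filter (fun i => e (ℓ-1) < i ∧ i < e ℓ), ((t:ℤ) - (ℓ:ℤ) + 2) * y i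
          = ∑ i ∈ Cu, ∑ ℓ ∈ Finset.Icc 3 t,
            (if e (ℓ-1) < i ∧ i < e ℓ then ((t:ℤ) - (ℓ:ℤ) + 2) * y i else 0) :=
        calc ∑ ℓ ∈ Finset.Icc 3 t,
              ∑ i ∈ Cu.filter (fun i => e (ℓ-1) < i ∧ i < e ℓ), ((t:ℤ) - (ℓ:ℤ) + 2) * y i
            = ∑ ℓ ∈ Finset.Icc 3 t, ∑ i ∈ Cu,
              (if e (ℓ-1) < i ∧ i < e ℓ then ((t:ℤ) - (ℓ:ℤ) + 2) * y i else 0) :=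
              Finset.sum_congr rfl (fun ℓ _ => Finset.sum_filter _ _)
          _ = _ := Finset.sum_comm
      have g4 : ∑ ℓ ∈ Finset.Icc 2 t, y (e ℓ)
          = ∑ i ∈ Cu, (if i ∈ (Finset.Icc 2 t).image e then y i else 0) := by
        have hfeq : Cu.filter (fun i => i ∈ (Finset.Icc 2 t).image e)
            = (Finset.Icc 2 t).image e := by
          rw [Finset.filter_mem_eq_inter, Finset.inter_eq_right.mpr hpts_sub]
        calc ∑ ℓ ∈ Finset.Icc 2 t, y (e ℓ) = ∑ i ∈ (Finset.Icc 2 t).image e, y i :=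
              (Finset.sum_image hinjpts).symm
          _ = ∑ i ∈ Cu.filter (fun i => i ∈ (Finset.Icc 2 t).image e), y i := by rw [hfeq]
          _ = _ := Finset.sum_filter _ _
      have g5 : ∑ i ∈ Cu.filter (fun i => e t < i), y i
          = ∑ i ∈ Cu, (if e t < i then y i else 0) := Finset.sum_filter _ _
      rw [g1, g2, g3, g4, g5, ← Finset.sum_add_distrib, ← Finset.sum_add_distrib,
        ← Finset.sum_add_distrib, ← Finset.sum_add_distrib]
      refine Finset.sum_congr rfl (fun i _ => ?_)
      have hc := coeff_eq ht hmono i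
      have e1 : (if i < e 1 then (t:ℤ) * y i else 0)
          = (if i < e 1 then (t:ℤ) else 0) * y i := by split <;> ring
      have e2 : (if e 1 ≤ i ∧ i < e 2 then ((t:ℤ) - 1) * y i else 0)
          = (if e 1 ≤ i ∧ i < e 2 then (t:ℤ) - 1 else 0) * y i := by split <;> ring
      have e3 : (∑ ℓ ∈ Finset.Icc 3 t,
            (if e (ℓ-1) < i ∧ i < e ℓ then ((t:ℤ) - (ℓ:ℤ) + 2) * y i else 0))
          = (∑ ℓ ∈ Finset.Icc 3 t,
            (if e (ℓ-1) < i ∧ i < e ℓ then (t:ℤ) - (ℓ:ℤ) + 2 else 0)) * y i := by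
        rw [Finset.sum_mul]
        exact Finset.sum_congr rfl (fun ℓ _ => by split <;> ring)
      have e4 : (if i ∈ (Finset.Icc 2 t).image e then y i else 0)
          = (if i ∈ (Finset.Icc 2 t).image e then (1:ℤ) else 0) * y i := by split <;> ring
      have e5 : (if e t < i then y i else 0)
          = (if e t < i then (1:ℤ) else 0) * y i := by split <;> ring
      rw [e1, e2, e3, e4, e5, ← add_mul, ← add_mul, ← add_mul, ← add_mul, hc]
    have hlhs01 : ∀ y : Fin n → ℤ, (∀ i, y i = 0 ∨ y i = 1) →
        lhs y = ∑ i ∈ Cu.filter (fun i => y i = 1), al t e i := by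
      intro y hy
      rw [hlhs_al y, Finset.sum_filter]
      refine Finset.sum_congr rfl (fun i _ => ?_)
      rcases hy i with h | h
      · rw [h, if_neg (by norm_num), mul_zero]
      · rw [h, if_pos rfl, mul_one]
    have hale1 : al t e (e 1) = (t:ℤ) - 1 := by
      have hne : e 1 ∉ (Finset.Icc 2 t).image e := by
        intro hmem
        obtain ⟨ℓ, hℓ, hℓe⟩ := Finset.mem_image.mp hmem
        rw [Finset.mem_Icc] at hℓ
        have := hinj ℓ 1 (by omega) hℓ.2 le_rfl (by omega) hℓe
        omega
      rw [al, if_neg hne, if_neg (lt_irrefl _)]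
      have hfull : (Finset.Icc 3 t).filter (fun ℓ => e 1 < e ℓ) = Finset.Icc 3 t :=
        Finset.filter_true_of_mem (fun ℓ hℓ => by
          rw [Finset.mem_Icc] at hℓ
          exact hlt 1 ℓ le_rfl (by omega) hℓ.2)
      rw [hfull, Nat.card_Icc]
      have hcast : ((t + 1 - 3 : ℕ) : ℤ) = (t:ℤ) - 2 := by omega
      rw [hcast]; ring
    have hβval : β = (∑ i ∈ C₀, al t e i) + ((t:ℤ) - 1) - 1 := by
      rw [hβ, hlhs01 (fun i => if i ∈ C₁ then 1 else 0)
        (fun i => by by_cases h : i ∈ C₁ <;> simp [h])]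
      have hfeq : Cu.filter (fun i => (if i ∈ C₁ then (1:ℤ) else 0) = 1) = C₁ := by
        have hiff : ∀ i ∈ Cu, ((if i ∈ C₁ then (1:ℤ) else 0) = 1) ↔ i ∈ C₁ := by
          intro i _
          by_cases h : i ∈ C₁ <;> simp [h]
        calc Cu.filter (fun i => (if i ∈ C₁ then (1:ℤ) else 0) = 1)
            = Cu.filter (fun i => i ∈ C₁) := Finset.filter_congr hiff
          _ = C₁ := by rw [Finset.filter_mem_eq_inter, Finset.inter_eq_right.mpr hC₁sub]
      rw [hfeq, hC₁, Finset.sum_insert (hout' 1 le_rfl (by omega)), hale1]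
      ring
    have hSsub : Cu.filter (fun i => x i = 1) ⊆ C₀ ∪ (Finset.Icc 1 t).image e := by
      rw [← hCuEq]
      exact Finset.filter_subset _ _
    have hnotcover : ¬ IsCover A b (Cu.filter (fun i => x i = 1)) := by
      rintro ⟨j, hj⟩
      have h1 : (∑ i ∈ Cu.filter (fun i => x i = 1), (A j i : ℤ))
          ≤ ∑ i : Fin n, (A j i : ℤ) * x i := by
        calc ∑ i ∈ Cu.filter (fun i => x i = 1), (A j i : ℤ)
            = ∑ i ∈ Cu.filter (fun i => x i = 1), (A j i : ℤ) * x i :=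
              Finset.sum_congr rfl (fun i hi => by
                rw [(Finset.mem_filter.mp hi).2, mul_one])
          _ ≤ ∑ i : Fin n, (A j i : ℤ) * x i := by
              apply Finset.sum_le_sum_of_subset_of_nonneg (Finset.subset_univ _)
              intro i _ _
              rcases hx01 i with h | h
              · rw [h, mul_zero]
              · rw [h, mul_one]
                exact Int.natCast_nonneg _
      have h2 := hxb j
      have h3 : (b j : ℤ) < ∑ i ∈ Cu.filter (fun i => x i = 1), (A j i : ℤ) := by
        exact_mod_cast hj
      linarith
    have hnd1 : ¬ Dominates (Cu.filter (fun i => x i = 1)) (insert (e 1) C₀) := fun hdom =>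
      hnotcover (dominates_cover hA hdom (hC₁ ▸ hcov1))
    have hnd2 : ¬ Dominates (Cu.filter (fun i => x i = 1))
        (C₀ ∪ (Finset.Icc 2 t).image e) := fun hdom =>
      hnotcover (dominates_cover hA hdom (hC₂ ▸ hcov2))
    have hcore := core ht hmono hout hSsub hnd1 hnd2
    rw [hlhs01 x hx01, hβval]
    linarith
end

section
/- Let K be a TOMKS, let C₀ ⊆ {1,…,n}, let t ≥ 3, and let i₁ < i₂ < … < i_{t+1} be elements of {1,…,n} \ C₀. Suppose C₁ := C₀ ∪ {i₁, i_{t+1}} and C₂ := C₀ ∪ {i₂,…,i_t} are both covers for K, and set C := C₁ ∪ C₂. Then: (a) {C₁, C₂} is a multi-cover for K; and (b) every x ∈ K satisfies Σ_{i∈C, i<i₁} (2t−1)·x_i + Σ_{i∈C, i₁≤i<i₂} (2t−3)·x_i + Σ_{ℓ=3}^{t} Σ_{i∈C, i_{ℓ−1}<i<i_ℓ} (2t−2ℓ+3)·x_i + Σ_{ℓ=2}^{t} 2·x_{i_ℓ} + Σ_{i∈C, i_t<i<i_{t+1}} 2·x_i + x_{i_{t+1}} + Σ_{i∈C, i>i_{t+1}}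 2·x_i ≤ β, where β is the value of the left-hand side at the incidence vector χ^{C₁} of C₁, minus 1. -/
open Finset

lemma dom_of_subset {n : ℕ} (S T : Finset (Fin n)) (h : T ⊆ S) : Dominates S T :=
  ⟨id, Set.injOn_id _, fun i hi => ⟨h hi, le_rfl⟩⟩

lemma infeasible_of_dominates_cover {m n : ℕ} {A : Fin m → Fin n → ℕ} {b : Fin m → ℕ}
    (hA : ColsOrdered A) {S S' : Finset (Fin n)} (hdom : Dominates S S')
    (hcov : IsCover A b S') (hfeas : ∀ j, ∑ i ∈ S, A j i ≤ b j) : False := by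
  obtain ⟨j, hj⟩ := hcov
  obtain ⟨f, hinj, hf⟩ := hdom
  have h1 : ∑ i ∈ S', A j i ≤ ∑ i ∈ S', A j (f i) :=
    Finset.sum_le_sum fun i hi => hA j (f i) i (hf i hi).2
  have h2 : ∑ i ∈ S', A j (f i) = ∑ i ∈ S'.image f, A j i :=
    (Finset.sum_image (fun x hx y hy hxy => hinj hx hy hxy)).symm
  have h3 : S'.image f ⊆ S := fun x hx => by
    obtain ⟨i, hi, rfl⟩ := Finset.mem_image.mp hx
    exact (hf i hi).1
  have h4 : ∑ i ∈ S'.image f, A j i ≤ ∑ i ∈ S, A j i :=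
    Finset.sum_le_sum_of_subset h3
  have := hfeas j; omega
  

lemma exists_inj_of_counting_aux {n : ℕ} (N : ℕ) : ∀ (C S : Finset (Fin n)), C.card ≤ N →
    (∀ p : Fin n, (C.filter (· ≤ p)).card ≤ (S.filter (· ≤ p)).card) →
    ∃ f : Fin n → Fin n, Set.InjOn f (C : Set (Fin n)) ∧ ∀ i ∈ C, f i ∈ S ∧ f i ≤ i := by
  induction N with
  | zero =>
    intro C S hC _
    have : C = ∅ := Finset.card_eq_zero.mp (Nat.le_zero.mp hC)
    subst this
    exact ⟨id, by simp [Set.InjOn], by simp⟩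
  | succ N ih =>
    intro C S hC hcnt
    rcases C.eq_empty_or_nonempty with rfl | hne
    · exact ⟨id, by simp [Set.InjOn], by simp⟩
    set i₀ := C.max' hne with hi₀
    have hi₀C : i₀ ∈ C := C.max'_mem hne
    have hCfull : C.filter (· ≤ i₀) = C := by
      apply Finset.filter_true_of_mem
      intro i hi; exact C.le_max' i hi
    have hScard : C.card ≤ (S.filter (· ≤ i₀)).card := by
      have := hcnt i₀; rwa [hCfull] at this
    have hSne : (S.filter (· ≤ i₀)).Nonempty := by
      rw [← Finset.card_pos]
      exact lt_of_lt_of_le (Finset.card_pos.mpr hne) hScard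
    set w := (S.filter (· ≤ i₀)).max' hSne with hw
    have hwmem := (S.filter (· ≤ i₀)).max'_mem hSne
    have hwS : w ∈ S := (Finset.mem_filter.mp hwmem).1
    have hwle : w ≤ i₀ := (Finset.mem_filter.mp hwmem).2
    -- recursive call
    have hcard' : (C.erase i₀).card ≤ N := by
      have := Finset.card_erase_of_mem hi₀C
      omega
    have hcnt' : ∀ p : Fin n,
        ((C.erase i₀).filter (· ≤ p)).card ≤ ((S.erase w).filter (· ≤ p)).card := by
      intro p
      by_cases hip : i₀ ≤ p
      · have h1 : (C.erase i₀).filter (· ≤ p) = (C.filter (· ≤ p)).erase i₀ := by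
          rw [Finset.filter_erase]
        have h2 : ((S.erase w).filter (· ≤ p)) = (S.filter (· ≤ p)).erase w := by
          rw [Finset.filter_erase]
        rw [h1, h2, Finset.card_erase_of_mem (by simp [hi₀C, hip]),
          Finset.card_erase_of_mem (by simp [hwS, le_trans hwle hip])]
        have := hcnt p; omega
      · have h1 : (C.erase i₀).filter (· ≤ p) = C.filter (· ≤ p) := by
          rw [Finset.filter_erase, Finset.erase_eq_of_notMem]
          simp only [Finset.mem_filter]
          tauto
        by_cases hwp : w ≤ p
        · -- p < i₀ and w ≤ p : S.filter ≤ p ⊇ S.filter ≤ i₀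
          have hsub : S.filter (· ≤ i₀) ⊆ S.filter (· ≤ p) := by
            intro z hz
            have hzle : z ≤ w := (S.filter (· ≤ i₀)).le_max' z hz
            simp only [Finset.mem_filter] at hz ⊢
            exact ⟨hz.1, le_trans hzle hwp⟩
          have h3 : ((S.erase w).filter (· ≤ p)) = (S.filter (· ≤ p)).erase w := by
            rw [Finset.filter_erase]
          have h4 : w ∈ S.filter (· ≤ p) := Finset.mem_filter.mpr ⟨hwS, hwp⟩
          rw [h1, h3, Finset.card_erase_of_mem h4]
          have h5 : C.card ≤ (S.filter (· ≤ p)).card :=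
            le_trans hScard (Finset.card_le_card hsub)
          have h6 : (C.filter (· ≤ p)).card < C.card := by
            apply Finset.card_lt_card
            constructor
            · exact Finset.filter_subset _ _
            · intro hsub2
              have := Finset.mem_filter.mp (hsub2 hi₀C)
              exact hip this.2
          omega
        · have h3 : ((S.erase w).filter (· ≤ p)) = S.filter (· ≤ p) := by
            rw [Finset.filter_erase, Finset.erase_eq_of_notMem]
            simp only [Finset.mem_filter]
            tauto
          rw [h1, h3]; exact hcnt p
    obtain ⟨f, hfinj, hf⟩ := ih (C.erase i₀) (S.erase w) hcard' hcnt'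
    refine ⟨fun i => if i = i₀ then w else f i, ?_, ?_⟩
    · intro a ha b hb hab
      simp only [Finset.coe_erase, Finset.mem_coe] at *
      by_cases ha0 : a = i₀ <;> by_cases hb0 : b = i₀
      · rw [ha0, hb0]
      · exfalso
        rw [if_pos ha0, if_neg hb0] at hab
        have := (hf b (Finset.mem_erase.mpr ⟨hb0, hb⟩)).1
        rw [← hab] at this
        exact (Finset.mem_erase.mp this).1 rfl
      · exfalso
        rw [if_neg ha0, if_pos hb0] at hab
        have := (hf a (Finset.mem_erase.mpr ⟨ha0, ha⟩)).1
        rw [hab] at this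
        exact (Finset.mem_erase.mp this).1 rfl
      · rw [if_neg ha0, if_neg hb0] at hab
        exact hfinj (by simp [Finset.mem_erase, ha0, ha]) (by simp [Finset.mem_erase, hb0, hb]) hab
    · intro i hi
      by_cases hi0 : i = i₀
      · subst hi0; simp only [if_pos rfl]; exact ⟨hwS, hwle⟩
      · simp only [if_neg hi0]
        have := hf i (Finset.mem_erase.mpr ⟨hi0, hi⟩)
        exact ⟨Finset.mem_of_mem_erase this.1, this.2⟩

lemma exists_counting_violation {n : ℕ} (C S : Finset (Fin n))
    (h : ¬ ∃ f : Fin n → Fin n, Set.InjOn f (C : Set (Fin n)) ∧ ∀ i ∈ C, f i ∈ S ∧ f i ≤ i) :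
    ∃ p : Fin n, (S.filter (· ≤ p)).card < (C.filter (· ≤ p)).card := by
  by_contra hc
  push_neg at hc
  exact h (exists_inj_of_counting_aux C.card C S le_rfl fun p => hc p)

def gfun (t k : ℕ) : ℤ :=
  if k = 0 then 2*t - 1 else if k = 1 then 2*t - 3 else if k + 1 ≤ t then 2*t - 2*k + 1 else 2

def Kfun {n : ℕ} (t : ℕ) (e : ℕ → Fin n) (p : Fin n) : ℕ :=
  ((Finset.Icc 1 (t+1)).filter (fun ℓ => e ℓ ≤ p)).card

lemma gfun_ge_two {t : ℕ} (k : ℕ) (ht : 3 ≤ t) : 2 ≤ gfun t k := by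
  unfold gfun; split_ifs <;> omega

lemma gfun_anti {t k k' : ℕ} (ht : 3 ≤ t) (h : k ≤ k') : gfun t k' ≤ gfun t k := by
  unfold gfun; split_ifs <;> omega

lemma gfun_ge {t k : ℕ} (ht : 3 ≤ t) (h2 : 2 ≤ k) (hkt : k ≤ t) :
    2*((t:ℤ) - k) + 1 ≤ gfun t k := by
  unfold gfun; split_ifs <;> omega

lemma gfun_one (t : ℕ) : gfun t 1 = 2*t - 3 := by simp [gfun]

lemma gfun_zero (t : ℕ) : gfun t 0 = 2*t - 1 := by simp [gfun]

set_option maxHeartbeats 2000000 in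
lemma core_mci {n : ℕ} (t : ℕ) (ht : 3 ≤ t) (e : ℕ → Fin n)
    (he : ∀ ℓ ℓ', 1 ≤ ℓ → ℓ < ℓ' → ℓ' ≤ t + 1 → e ℓ < e ℓ')
    (α : Fin n → ℤ) (M T : Finset (Fin n))
    (hT : T ⊆ (Finset.Icc 1 (t+1)).image e)
    (hα1 : α (e 1) ≤ 2*t - 3)
    (hα2 : ∀ ℓ ∈ Finset.Icc 2 t, α (e ℓ) ≤ 2)
    (hα3 : α (e (t+1)) ≤ 1)
    (hαM : ∀ i ∈ M, gfun t (Kfun t e i) ≤ α i)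
    (H1 : ∃ p, (T.filter (· ≤ p)).card + 1 ≤
      (M.filter (· ≤ p)).card + (({e 1, e (t+1)} : Finset (Fin n)).filter (· ≤ p)).card)
    (H2 : ∃ q, (T.filter (· ≤ q)).card + 1 ≤
      (M.filter (· ≤ q)).card + (((Finset.Icc 2 t).image e).filter (· ≤ q)).card) :
    ∑ i ∈ T, α i ≤ ∑ i ∈ M, α i + (2*t - 3) := by
  have htZ : (3:ℤ) ≤ (t:ℤ) := by exact_mod_cast ht
  -- basic facts about e
  have he1t1 : e 1 < e (t+1) := he 1 (t+1) le_rfl (by omega) le_rfl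
  have he1ne : e 1 ≠ e (t+1) := ne_of_lt he1t1
  have hele : ∀ ℓ, 1 ≤ ℓ → ℓ ≤ t+1 → e 1 ≤ e ℓ ∧ e ℓ ≤ e (t+1) := by
    intro ℓ h1 h2
    constructor
    · rcases Nat.eq_or_lt_of_le h1 with h | h
      · rw [← h]
      · exact le_of_lt (he 1 ℓ le_rfl h h2)
    · rcases Nat.eq_or_lt_of_le h2 with h | h
      · rw [h]
      · exact le_of_lt (he ℓ (t+1) h1 h le_rfl)
  have he2le : ∀ ℓ, 2 ≤ ℓ → ℓ ≤ t → e 2 ≤ e ℓ := by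
    intro ℓ h1 h2
    rcases Nat.eq_or_lt_of_le h1 with h | h
    · rw [← h]
    · exact le_of_lt (he 2 ℓ (by omega) h (by omega))
  -- α is at least 2 on M
  have hM2 : ∀ i ∈ M, (2:ℤ) ≤ α i := fun i hi => le_trans (gfun_ge_two _ ht) (hαM i hi)
  have hMnn : ∀ i ∈ M, (0:ℤ) ≤ α i := fun i hi => le_trans (by norm_num) (hM2 i hi)
  have hMsum0 : (0:ℤ) ≤ ∑ i ∈ M, α i := Finset.sum_nonneg hMnn
  -- T' and its properties
  set T' := T \ {e 1, e (t+1)} with hT'def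
  have hT'T : T' ⊆ T := Finset.sdiff_subset
  have hT'sub : T' ⊆ (Finset.Icc 2 t).image e := by
    intro i hi
    obtain ⟨hiT, hins⟩ := Finset.mem_sdiff.mp hi
    obtain ⟨ℓ, hℓ, rfl⟩ := Finset.mem_image.mp (hT hiT)
    simp only [Finset.mem_insert, Finset.mem_singleton, not_or] at hins
    simp only [Finset.mem_Icc] at hℓ
    have h1 : ℓ ≠ 1 := fun h => hins.1 (by rw [h])
    have h2 : ℓ ≠ t+1 := fun h => hins.2 (by rw [h])
    exact Finset.mem_image.mpr ⟨ℓ, Finset.mem_Icc.mpr ⟨by omega, by omega⟩, rfl⟩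
  have hinjOn : Set.InjOn e ((Finset.Icc 2 t : Finset ℕ) : Set ℕ) := by
    intro a ha b hb hab
    simp only [Finset.coe_Icc, Set.mem_Icc] at ha hb
    by_contra hne
    rcases Nat.lt_or_ge a b with h | h
    · exact absurd hab (ne_of_lt (he a b (by omega) h (by omega)))
    · have h' : b < a := by omega
      exact absurd hab.symm (ne_of_lt (he b a (by omega) h' (by omega)))
  have hcard_img : ((Finset.Icc 2 t).image e).card = t - 1 := by
    rw [Finset.card_image_of_injOn hinjOn, Nat.card_Icc]
    omega
  have hτ'le : T'.card + 1 ≤ t := by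
    have h1 : T'.card ≤ ((Finset.Icc 2 t).image e).card := Finset.card_le_card hT'sub
    omega
  -- the sum over T is bounded
  have hT'sum : ∑ i ∈ T', α i ≤ 2 * (T'.card : ℤ) := by
    calc ∑ i ∈ T', α i ≤ ∑ _i ∈ T', (2:ℤ) := by
          apply Finset.sum_le_sum
          intro i hi
          obtain ⟨ℓ, hℓ, rfl⟩ := Finset.mem_image.mp (hT'sub hi)
          exact hα2 ℓ hℓ
      _ = 2 * (T'.card : ℤ) := by rw [Finset.sum_const, nsmul_eq_mul]; ring
  have hTsum : ∑ i ∈ T, α i ≤ (if e 1 ∈ T then 2*(t:ℤ)-3 else 0) + 2 * (T'.card : ℤ)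
      + (if e (t+1) ∈ T then 1 else 0) := by
    have hsplit : ∑ i ∈ T, α i =
        (∑ i ∈ T.filter (· ∈ ({e 1, e (t+1)} : Finset (Fin n))), α i) + ∑ i ∈ T', α i := by
      rw [hT'def, Finset.sdiff_eq_filter]
      exact (Finset.sum_filter_add_sum_filter_not T _ α).symm
    have hPsum : ∑ i ∈ T.filter (· ∈ ({e 1, e (t+1)} : Finset (Fin n))), α i ≤
        (if e 1 ∈ T then 2*(t:ℤ)-3 else 0) + (if e (t+1) ∈ T then 1 else 0) := by
      by_cases h1 : e 1 ∈ T <;> by_cases h2 : e (t+1) ∈ T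
      · have hset : T.filter (· ∈ ({e 1, e (t+1)} : Finset (Fin n))) = {e 1, e (t+1)} := by
          ext i
          simp only [Finset.mem_filter, Finset.mem_insert, Finset.mem_singleton]
          constructor
          · tauto
          · rintro (rfl | rfl) <;> simp [h1, h2]
        rw [hset, if_pos h1, if_pos h2, Finset.sum_insert (by simp [he1ne]),
          Finset.sum_singleton]
        linarith
      · have hset : T.filter (· ∈ ({e 1, e (t+1)} : Finset (Fin n))) = {e 1} := by
          ext i
          simp only [Finset.mem_filter, Finset.mem_insert, Finset.mem_singleton]
          constructor
          · rintro ⟨hiT, rfl | rfl⟩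
            · rfl
            · exact absurd hiT h2
          · rintro rfl; exact ⟨h1, Or.inl rfl⟩
        rw [hset, if_pos h1, if_neg h2, Finset.sum_singleton]
        linarith
      · have hset : T.filter (· ∈ ({e 1, e (t+1)} : Finset (Fin n))) = {e (t+1)} := by
          ext i
          simp only [Finset.mem_filter, Finset.mem_insert, Finset.mem_singleton]
          constructor
          · rintro ⟨hiT, rfl | rfl⟩
            · exact absurd hiT h1
            · rfl
          · rintro rfl; exact ⟨h2, Or.inr rfl⟩
        rw [hset, if_neg h1, if_pos h2, Finset.sum_singleton]
        linarith
      · have hset : T.filter (· ∈ ({e 1, e (t+1)} : Finset (Fin n))) = ∅ := by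
          rw [Finset.filter_eq_empty_iff]
          rintro i hiT hmem
          rcases Finset.mem_insert.mp hmem with rfl | hmem
          · exact h1 hiT
          · rw [Finset.mem_singleton] at hmem; subst hmem; exact h2 hiT
        rw [hset, if_neg h1, if_neg h2, Finset.sum_empty]
        norm_num
    rw [hsplit]
    linarith
  -- K facts
  have hKmono : ∀ {i p : Fin n}, i ≤ p → Kfun t e i ≤ Kfun t e p := by
    intro i p hip
    apply Finset.card_le_card
    intro ℓ hℓ
    simp only [Finset.mem_filter] at hℓ ⊢
    exact ⟨hℓ.1, le_trans hℓ.2 hip⟩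
  have hK0 : ∀ p, p < e 1 → Kfun t e p = 0 := by
    intro p hp
    rw [Kfun, Finset.card_eq_zero, Finset.filter_eq_empty_iff]
    intro ℓ hℓ
    simp only [Finset.mem_Icc] at hℓ
    exact not_le.mpr (lt_of_lt_of_le hp (hele ℓ hℓ.1 hℓ.2).1)
  have hK1 : ∀ p, e 1 ≤ p → 1 ≤ Kfun t e p := by
    intro p hp
    rw [Kfun, Nat.succ_le_iff, Finset.card_pos]
    exact ⟨1, Finset.mem_filter.mpr ⟨Finset.mem_Icc.mpr ⟨le_rfl, by omega⟩, hp⟩⟩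
  have hKt : ∀ p, p < e (t+1) → Kfun t e p ≤ t := by
    intro p hp
    have hsub : (Finset.Icc 1 (t+1)).filter (fun ℓ => e ℓ ≤ p) ⊆ Finset.Icc 1 t := by
      intro ℓ hℓ
      obtain ⟨hℓ1, hℓ2⟩ := Finset.mem_filter.mp hℓ
      simp only [Finset.mem_Icc] at hℓ1 ⊢
      refine ⟨hℓ1.1, ?_⟩
      by_contra hc
      have hℓeq : ℓ = t+1 := by omega
      subst hℓeq
      exact absurd hℓ2 (not_le.mpr hp)
    have h1 := Finset.card_le_card hsub
    rw [Nat.card_Icc] at h1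
    rw [Kfun]
    omega
  have hK2 : ∀ p, e 2 ≤ p → 2 ≤ Kfun t e p := by
    intro p hp
    have hsub : ({1, 2} : Finset ℕ) ⊆ (Finset.Icc 1 (t+1)).filter (fun ℓ => e ℓ ≤ p) := by
      intro ℓ hℓ
      simp only [Finset.mem_insert, Finset.mem_singleton] at hℓ
      rcases hℓ with rfl | rfl
      · exact Finset.mem_filter.mpr ⟨Finset.mem_Icc.mpr ⟨le_rfl, by omega⟩,
          le_trans (le_of_lt (he 1 2 le_rfl one_lt_two (by omega))) hp⟩
      · exact Finset.mem_filter.mpr ⟨Finset.mem_Icc.mpr ⟨by omega, by omega⟩, hp⟩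
    have h1 := Finset.card_le_card hsub
    have h2 : ({1, 2} : Finset ℕ).card = 2 := rfl
    rw [Kfun]
    omega
  have hK1eq : ∀ p, e 1 ≤ p → p < e 2 → Kfun t e p = 1 := by
    intro p hp1 hp2
    have hub : (Finset.Icc 1 (t+1)).filter (fun ℓ => e ℓ ≤ p) ⊆ {1} := by
      intro ℓ hℓ
      obtain ⟨hℓ1, hℓ2⟩ := Finset.mem_filter.mp hℓ
      simp only [Finset.mem_Icc] at hℓ1
      simp only [Finset.mem_singleton]
      by_contra hc
      have h2 : 2 ≤ ℓ := by omega
      have he2ℓ : e 2 ≤ e ℓ := by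
        rcases Nat.eq_or_lt_of_le h2 with h | h
        · rw [← h]
        · exact le_of_lt (he 2 ℓ (by omega) h (by omega))
      exact absurd (le_trans he2ℓ hℓ2) (not_le.mpr hp2)
    have h1 := Finset.card_le_card hub
    have h2 := hK1 p hp1
    simp only [Finset.card_singleton] at h1
    rw [Kfun] at *
    omega
  -- cnt facts
  have hpair_le2 : ∀ p : Fin n, (({e 1, e (t+1)} : Finset (Fin n)).filter (· ≤ p)).card ≤ 2 := by
    intro p
    have h1 := Finset.card_filter_le ({e 1, e (t+1)} : Finset (Fin n)) (· ≤ p)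
    have h2 := Finset.card_insert_le (e 1) ({e (t+1)} : Finset (Fin n))
    have h3 : ({e (t+1)} : Finset (Fin n)).card = 1 := rfl
    omega
  have hpair1 : ∀ p : Fin n, p < e (t+1) →
      (({e 1, e (t+1)} : Finset (Fin n)).filter (· ≤ p)).card ≤ 1 := by
    intro p hp
    have hsub : ({e 1, e (t+1)} : Finset (Fin n)).filter (· ≤ p) ⊆ {e 1} := by
      intro i hi
      obtain ⟨hi1, hi2⟩ := Finset.mem_filter.mp hi
      rcases Finset.mem_insert.mp hi1 with rfl | hi1
      · exact Finset.mem_singleton_self _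
      · rw [Finset.mem_singleton] at hi1; subst hi1
        exact absurd hi2 (not_le.mpr hp)
    simpa using Finset.card_le_card hsub
  have hpair0 : ∀ p : Fin n, p < e 1 →
      (({e 1, e (t+1)} : Finset (Fin n)).filter (· ≤ p)).card = 0 := by
    intro p hp
    rw [Finset.card_eq_zero, Finset.filter_eq_empty_iff]
    intro i hi
    rcases Finset.mem_insert.mp hi with rfl | hi
    · exact not_le.mpr hp
    · rw [Finset.mem_singleton] at hi; subst hi
      exact not_le.mpr (lt_trans hp he1t1)
  have himg0 : ∀ q : Fin n, q < e 2 →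
      ((((Finset.Icc 2 t).image e)).filter (· ≤ q)).card = 0 := by
    intro q hq
    rw [Finset.card_eq_zero, Finset.filter_eq_empty_iff]
    intro i hi
    obtain ⟨ℓ, hℓ, rfl⟩ := Finset.mem_image.mp hi
    simp only [Finset.mem_Icc] at hℓ
    exact not_le.mpr (lt_of_lt_of_le hq (he2le ℓ hℓ.1 hℓ.2))
  have hT'cnt0 : ∀ p : Fin n, p < e 2 → (T'.filter (· ≤ p)).card = 0 := by
    intro p hp
    have h := Finset.card_le_card (Finset.filter_subset_filter (· ≤ p) hT'sub)
    rw [himg0 p hp] at h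
    omega
  have hcntT_lb1 : ∀ p : Fin n, e 1 ∈ T → e 1 ≤ p →
      (T'.filter (· ≤ p)).card + 1 ≤ (T.filter (· ≤ p)).card := by
    intro p haT hp
    have hT'e1 : e 1 ∉ T'.filter (· ≤ p) := by
      intro h
      exact (Finset.mem_sdiff.mp (Finset.mem_filter.mp h).1).2 (Finset.mem_insert_self _ _)
    have hsub : insert (e 1) (T'.filter (· ≤ p)) ⊆ T.filter (· ≤ p) := by
      intro i hi
      rcases Finset.mem_insert.mp hi with rfl | hi
      · exact Finset.mem_filter.mpr ⟨haT, hp⟩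
      · obtain ⟨hiT', hip⟩ := Finset.mem_filter.mp hi
        exact Finset.mem_filter.mpr ⟨hT'T hiT', hip⟩
    have h1 := Finset.card_le_card hsub
    rw [Finset.card_insert_of_notMem hT'e1] at h1
    omega
  -- lower bound machinery for the sum over M
  have hMfilt : ∀ p : Fin n, ∑ i ∈ M.filter (· ≤ p), α i ≤ ∑ i ∈ M, α i :=
    fun p => Finset.sum_le_sum_of_subset_of_nonneg (Finset.filter_subset _ _)
      (fun i hi _ => hMnn i hi)
  have hMlb : ∀ p : Fin n,
      ((M.filter (· ≤ p)).card : ℤ) * gfun t (Kfun t e p) ≤ ∑ i ∈ M, α i := by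
    intro p
    have h1 : ∀ i ∈ M.filter (· ≤ p), gfun t (Kfun t e p) ≤ α i := by
      intro i hi
      obtain ⟨hiM, hip⟩ := Finset.mem_filter.mp hi
      exact le_trans (gfun_anti ht (hKmono hip)) (hαM i hiM)
    calc ((M.filter (· ≤ p)).card : ℤ) * gfun t (Kfun t e p)
        = ∑ _i ∈ M.filter (· ≤ p), gfun t (Kfun t e p) := by
          rw [Finset.sum_const, nsmul_eq_mul]
      _ ≤ ∑ i ∈ M.filter (· ≤ p), α i := Finset.sum_le_sum h1
      _ ≤ ∑ i ∈ M, α i := hMfilt p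
  have hMerase : ∀ i0 : Fin n, 2 * (((M.erase i0).card : ℤ)) ≤ ∑ i ∈ M.erase i0, α i := by
    intro i0
    calc 2 * (((M.erase i0).card : ℤ)) = ∑ _i ∈ M.erase i0, (2:ℤ) := by
          rw [Finset.sum_const, nsmul_eq_mul]; ring
      _ ≤ _ := Finset.sum_le_sum fun i hi => hM2 i (Finset.mem_of_mem_erase hi)
  -- τ' versus counting below p
  have hτ'cnt : ∀ p : Fin n, e 1 ≤ p → p < e (t+1) →
      T'.card + Kfun t e p ≤ (T'.filter (· ≤ p)).card + t := by
    intro p hp1 hpt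
    have hsplit := Finset.card_filter_add_card_filter_not (s := T') (p := (· ≤ p))
    have hb : (T'.filter (fun i => ¬ i ≤ p)).card ≤
        ((Finset.Icc 2 t).filter (fun ℓ => ¬ e ℓ ≤ p)).card := by
      have hsub : T'.filter (fun i => ¬ i ≤ p) ⊆
          ((Finset.Icc 2 t).filter (fun ℓ => ¬ e ℓ ≤ p)).image e := by
        intro i hi
        obtain ⟨hiT', hip⟩ := Finset.mem_filter.mp hi
        obtain ⟨ℓ, hℓ, rfl⟩ := Finset.mem_image.mp (hT'sub hiT')
        exact Finset.mem_image.mpr ⟨ℓ, Finset.mem_filter.mpr ⟨hℓ, hip⟩, rfl⟩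
      exact le_trans (Finset.card_le_card hsub) Finset.card_image_le
    have hcd := Finset.card_filter_add_card_filter_not
      (s := Finset.Icc 2 t) (p := (fun ℓ => e ℓ ≤ p))
    have hKub : Kfun t e p ≤ 1 + ((Finset.Icc 2 t).filter (fun ℓ => e ℓ ≤ p)).card := by
      have hsub : (Finset.Icc 1 (t+1)).filter (fun ℓ => e ℓ ≤ p) ⊆
          insert 1 ((Finset.Icc 2 t).filter (fun ℓ => e ℓ ≤ p)) := by
        intro ℓ hℓ
        obtain ⟨hℓ1, hℓ2⟩ := Finset.mem_filter.mp hℓ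
        simp only [Finset.mem_Icc] at hℓ1
        rcases Nat.eq_or_lt_of_le hℓ1.1 with h | h
        · exact Finset.mem_insert.mpr (Or.inl h.symm)
        · refine Finset.mem_insert.mpr (Or.inr (Finset.mem_filter.mpr
            ⟨Finset.mem_Icc.mpr ⟨by omega, ?_⟩, hℓ2⟩))
          by_contra hc
          have hℓeq : ℓ = t+1 := by omega
          subst hℓeq
          exact absurd hℓ2 (not_le.mpr hpt)
      have h1 := Finset.card_le_card hsub
      have h2 := Finset.card_insert_le 1 ((Finset.Icc 2 t).filter (fun ℓ => e ℓ ≤ p))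
      rw [Kfun]
      omega
    rw [Nat.card_Icc] at hcd
    omega
  have hT'e1 : e 1 ∉ T' := fun h => (Finset.mem_sdiff.mp h).2 (Finset.mem_insert_self _ _)
  have hT'et1 : e (t+1) ∉ T' := fun h => (Finset.mem_sdiff.mp h).2 (by simp)
  have hτ'Z : (T'.card : ℤ) + 1 ≤ (t:ℤ) := by exact_mod_cast hτ'le
  -- MAIN CASE ANALYSIS
  by_cases hlow : ∃ i ∈ M, i < e 1
  · -- CASE 1 : some element of M below e 1
    obtain ⟨i0, hi0M, hi0lt⟩ := hlow
    have hαi0 : (2*(t:ℤ) - 1) ≤ α i0 := by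
      have h := hαM i0 hi0M
      rw [hK0 i0 hi0lt, gfun_zero] at h
      exact h
    have hMsum : (2*(t:ℤ) - 1) ≤ ∑ i ∈ M, α i := by
      rw [← Finset.add_sum_erase M α hi0M]
      have h2 := hMerase i0
      have h3 : (0:ℤ) ≤ ((M.erase i0).card : ℤ) := by positivity
      linarith
    have hif1 : (if e 1 ∈ T then 2*(t:ℤ)-3 else 0) ≤ 2*(t:ℤ)-3 := by
      split_ifs <;> linarith
    have hif2 : (if e (t+1) ∈ T then (1:ℤ) else 0) ≤ 1 := by
      split_ifs <;> linarith
    linarith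
  · push_neg at hlow
    have hcnt_low : ∀ r : Fin n, r < e 1 → (M.filter (· ≤ r)).card = 0 := by
      intro r hr
      rw [Finset.card_eq_zero, Finset.filter_eq_empty_iff]
      intro i hi hir
      exact absurd (lt_of_le_of_lt hir hr) (not_lt.mpr (hlow i hi))
    by_cases ha : e 1 ∈ T
    · -- CASE 3 : e 1 ∈ T
      rw [if_pos ha] at hTsum
      obtain ⟨p, hp⟩ := H1
      by_cases hp1 : p < e 1
      · exfalso
        rw [hcnt_low p hp1, hpair0 p hp1] at hp
        omega
      push_neg at hp1
      by_cases hpt : e (t+1) ≤ p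
      · -- 3c : p above e (t+1)
        have hTfull : T.filter (· ≤ p) = T := by
          apply Finset.filter_true_of_mem
          intro i hi
          obtain ⟨ℓ, hℓ, rfl⟩ := Finset.mem_image.mp (hT hi)
          simp only [Finset.mem_Icc] at hℓ
          exact le_trans (hele ℓ hℓ.1 hℓ.2).2 hpt
        have hTcard : T'.card + 1 + (if e (t+1) ∈ T then 1 else 0) ≤ T.card := by
          by_cases hc : e (t+1) ∈ T
          · rw [if_pos hc]
            have hsub : insert (e 1) (insert (e (t+1)) T') ⊆ T := by
              intro i hi
              rcases Finset.mem_insert.mp hi with rfl | hi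
              · exact ha
              rcases Finset.mem_insert.mp hi with rfl | hi
              · exact hc
              · exact hT'T hi
            have h1 := Finset.card_le_card hsub
            have hcins : (insert (e 1) (insert (e (t+1)) T')).card = T'.card + 2 := by
              rw [Finset.card_insert_of_notMem (by
                intro h
                rcases Finset.mem_insert.mp h with h | h
                · exact he1ne h
                · exact hT'e1 h), Finset.card_insert_of_notMem hT'et1]
            omega
          · rw [if_neg hc]
            have hsub : insert (e 1) T' ⊆ T := by
              intro i hi
              rcases Finset.mem_insert.mp hi with rfl | hi
              · exact ha
              · exact hT'T hi
            have h1 := Finset.card_le_card hsub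
            have hcins : (insert (e 1) T').card = T'.card + 1 :=
              Finset.card_insert_of_notMem hT'e1
            omega
        have hu := hpair_le2 p
        rw [hTfull] at hp
        have hg2 : (2:ℤ) ≤ gfun t (Kfun t e p) := gfun_ge_two _ ht
        have hml := hMlb p
        have hprod : ((M.filter (· ≤ p)).card : ℤ) * 2 ≤
            ((M.filter (· ≤ p)).card : ℤ) * gfun t (Kfun t e p) :=
          mul_le_mul_of_nonneg_left hg2 (by positivity)
        by_cases hc : e (t+1) ∈ T
        · rw [if_pos hc] at hTsum
          rw [if_pos hc] at hTcard
          have hMcnt : T'.card + 1 ≤ (M.filter (· ≤ p)).card := by omega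
          have hMcntZ : (T'.card : ℤ) + 1 ≤ ((M.filter (· ≤ p)).card : ℤ) := by
            exact_mod_cast hMcnt
          linarith
        · rw [if_neg hc] at hTsum
          rw [if_neg hc] at hTcard
          have hMcnt : T'.card ≤ (M.filter (· ≤ p)).card := by omega
          have hMcntZ : (T'.card : ℤ) ≤ ((M.filter (· ≤ p)).card : ℤ) := by
            exact_mod_cast hMcnt
          linarith
      · -- 3b : e 1 ≤ p < e (t+1)
        have hptlt : p < e (t+1) := not_le.mp hpt
        have hu1 := hpair1 p hptlt
        have hTlb := hcntT_lb1 p ha hp1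
        have hMcnt : (T'.filter (· ≤ p)).card + 1 ≤ (M.filter (· ≤ p)).card := by omega
        by_cases hp2 : p < e 2
        · -- K p = 1
          have hs0 : (T'.filter (· ≤ p)).card = 0 := hT'cnt0 p hp2
          have hKp : Kfun t e p = 1 := hK1eq p hp1 hp2
          have hml := hMlb p
          rw [hKp, gfun_one] at hml
          have hMc1 : 1 ≤ (M.filter (· ≤ p)).card := by omega
          by_cases hfull : t ≤ T'.card + 1
          · -- T' is everything
            have hT'full : T' = (Finset.Icc 2 t).image e :=
              Finset.eq_of_subset_of_card_le hT'sub (by omega)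
            obtain ⟨q, hq⟩ := H2
            by_cases hq1 : q < e 1
            · exfalso
              rw [hcnt_low q hq1,
                himg0 q (lt_trans hq1 (he 1 2 le_rfl one_lt_two (by omega)))] at hq
              omega
            push_neg at hq1
            have hTq := hcntT_lb1 q ha hq1
            have himgq : (T'.filter (· ≤ q)).card =
                (((Finset.Icc 2 t).image e).filter (· ≤ q)).card := by rw [hT'full]
            have hMq : 2 ≤ (M.filter (· ≤ q)).card := by omega
            have hM2card : 2 ≤ M.card :=
              le_trans hMq (Finset.card_le_card (Finset.filter_subset _ _))
            obtain ⟨i0, hi0⟩ := Finset.card_pos.mp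
              (show 0 < (M.filter (· ≤ p)).card by omega)
            obtain ⟨hi0M, hi0p⟩ := Finset.mem_filter.mp hi0
            have hαi0 : (2*(t:ℤ)-3) ≤ α i0 := by
              have h := hαM i0 hi0M
              have hki : Kfun t e i0 ≤ 1 := le_trans (hKmono hi0p) (le_of_eq hKp)
              have h2 : gfun t 1 ≤ gfun t (Kfun t e i0) := gfun_anti ht hki
              rw [gfun_one] at h2
              linarith
            have hsum : (2*(t:ℤ)-3) + 2 ≤ ∑ i ∈ M, α i := by
              rw [← Finset.add_sum_erase M α hi0M]
              have h1 := hMerase i0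
              have h2 : 1 ≤ (M.erase i0).card := by
                rw [Finset.card_erase_of_mem hi0M]; omega
              have h3 : (1:ℤ) ≤ ((M.erase i0).card : ℤ) := by exact_mod_cast h2
              linarith
            by_cases hc : e (t+1) ∈ T
            · rw [if_pos hc] at hTsum; linarith
            · rw [if_neg hc] at hTsum; linarith
          · -- τ' ≤ t - 2
            have hτ'2Z : (T'.card : ℤ) + 2 ≤ (t:ℤ) := by
              have : T'.card + 2 ≤ t := by omega
              exact_mod_cast this
            have hMZ1 : (1:ℤ) ≤ ((M.filter (· ≤ p)).card : ℤ) := by exact_mod_cast hMc1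
            have hsum : (2*(t:ℤ)-3) ≤ ∑ i ∈ M, α i := by
              have h1 : (1:ℤ) * (2*(t:ℤ)-3) ≤ ((M.filter (· ≤ p)).card : ℤ) * (2*(t:ℤ)-3) :=
                mul_le_mul_of_nonneg_right hMZ1 (by linarith)
              linarith
            by_cases hc : e (t+1) ∈ T
            · rw [if_pos hc] at hTsum; linarith
            · rw [if_neg hc] at hTsum; linarith
        · -- e 2 ≤ p, so 2 ≤ K p ≤ t
          push_neg at hp2
          have hk2 := hK2 p hp2
          have hkt := hKt p hptlt
          have hgge := gfun_ge ht hk2 hkt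
          have hg2 : (2:ℤ) ≤ gfun t (Kfun t e p) := gfun_ge_two _ ht
          have hτc := hτ'cnt p hp1 hptlt
          have hml := hMlb p
          have hMcntZ : ((T'.filter (· ≤ p)).card : ℤ) + 1 ≤
              ((M.filter (· ≤ p)).card : ℤ) := by exact_mod_cast hMcnt
          have hτcZ : (T'.card : ℤ) + (Kfun t e p : ℤ) ≤
              ((T'.filter (· ≤ p)).card : ℤ) + (t:ℤ) := by exact_mod_cast hτc
          have h1 : (((T'.filter (· ≤ p)).card : ℤ) + 1) * gfun t (Kfun t e p) ≤
              ((M.filter (· ≤ p)).card : ℤ) * gfun t (Kfun t e p) :=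
            mul_le_mul_of_nonneg_right hMcntZ (by linarith)
          have h2 : ((T'.filter (· ≤ p)).card : ℤ) * 2 ≤
              ((T'.filter (· ≤ p)).card : ℤ) * gfun t (Kfun t e p) :=
            mul_le_mul_of_nonneg_left hg2 (by positivity)
          have h3 : (((T'.filter (· ≤ p)).card : ℤ) + 1) * gfun t (Kfun t e p) =
              ((T'.filter (· ≤ p)).card : ℤ) * gfun t (Kfun t e p) + gfun t (Kfun t e p) := by
            ring
          by_cases hc : e (t+1) ∈ T
          · rw [if_pos hc] at hTsum; linarith
          · rw [if_neg hc] at hTsum; linarith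
    · -- CASE 2 : e 1 ∉ T
      rw [if_neg ha] at hTsum
      by_cases hfull : t ≤ T'.card + 1
      · have hT'full : T' = (Finset.Icc 2 t).image e :=
          Finset.eq_of_subset_of_card_le hT'sub (by omega)
        obtain ⟨q, hq⟩ := H2
        have h1 : (T'.filter (· ≤ q)).card ≤ (T.filter (· ≤ q)).card :=
          Finset.card_le_card (Finset.filter_subset_filter _ hT'T)
        have himgq : (T'.filter (· ≤ q)).card =
            (((Finset.Icc 2 t).image e).filter (· ≤ q)).card := by rw [hT'full]
        have hMq : 1 ≤ (M.filter (· ≤ q)).card := by omega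
        obtain ⟨i0, hi0⟩ := Finset.card_pos.mp (show 0 < (M.filter (· ≤ q)).card by omega)
        obtain ⟨hi0M, _⟩ := Finset.mem_filter.mp hi0
        have hsum2 : (2:ℤ) ≤ ∑ i ∈ M, α i := by
          rw [← Finset.add_sum_erase M α hi0M]
          have h2 := hMerase i0
          have h3 : (0:ℤ) ≤ ((M.erase i0).card : ℤ) := by positivity
          have h4 := hM2 i0 hi0M
          linarith
        by_cases hc : e (t+1) ∈ T
        · rw [if_pos hc] at hTsum; linarith
        · rw [if_neg hc] at hTsum; linarith
      · have hτ'2Z : (T'.card : ℤ) + 2 ≤ (t:ℤ) := by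
          have : T'.card + 2 ≤ t := by omega
          exact_mod_cast this
        by_cases hc : e (t+1) ∈ T
        · rw [if_pos hc] at hTsum; linarith
        · rw [if_neg hc] at hTsum; linarith

def alphaF {n : ℕ} (t : ℕ) (e : ℕ → Fin n) (Cu : Finset (Fin n)) (i : Fin n) : ℤ :=
  if i ∈ Cu then
    (if i = e (t+1) then 1
     else if i ∈ (Finset.Icc 2 t).image e then 2
     else gfun t (Kfun t e i))
  else 0

section KL
variable {n : ℕ} {t : ℕ} {e : ℕ → Fin n}

lemma e_le_e (he : ∀ ℓ ℓ', 1 ≤ ℓ → ℓ < ℓ' → ℓ' ≤ t + 1 → e ℓ < e ℓ') (hℓ1 : 1 ≤ ℓ) (h : ℓ ≤ ℓ') (hℓ2 : ℓ' ≤ t+1) : e ℓ ≤ e ℓ' := by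
  rcases Nat.eq_or_lt_of_le h with h | h
  · rw [h]
  · exact le_of_lt (he ℓ ℓ' hℓ1 h hℓ2)

lemma Kfun_zero (he : ∀ ℓ ℓ', 1 ≤ ℓ → ℓ < ℓ' → ℓ' ≤ t + 1 → e ℓ < e ℓ') {i : Fin n} (hi : i < e 1) : Kfun t e i = 0 := by
  rw [Kfun, Finset.card_eq_zero, Finset.filter_eq_empty_iff]
  intro ℓ hℓ
  simp only [Finset.mem_Icc] at hℓ
  exact not_le.mpr (lt_of_lt_of_le hi (e_le_e he le_rfl hℓ.1 hℓ.2))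

lemma Kfun_eq (he : ∀ ℓ ℓ', 1 ≤ ℓ → ℓ < ℓ' → ℓ' ≤ t + 1 → e ℓ < e ℓ') {i : Fin n} {ℓ : ℕ} (hℓ1 : 1 ≤ ℓ) (hℓ2 : ℓ ≤ t)
    (h1 : e ℓ ≤ i) (h2 : i < e (ℓ+1)) : Kfun t e i = ℓ := by
  have hset : (Finset.Icc 1 (t+1)).filter (fun ℓ' => e ℓ' ≤ i) = Finset.Icc 1 ℓ := by
    ext ℓ'
    simp only [Finset.mem_filter, Finset.mem_Icc]
    constructor
    · rintro ⟨⟨ha, hb⟩, hc⟩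
      refine ⟨ha, ?_⟩
      by_contra hcon
      have : e (ℓ+1) ≤ e ℓ' := e_le_e he (by omega) (by omega) hb
      exact absurd (le_trans this hc) (not_le.mpr h2)
    · rintro ⟨ha, hb⟩
      exact ⟨⟨ha, by omega⟩, le_trans (e_le_e he ha hb (by omega)) h1⟩
  rw [Kfun, hset, Nat.card_Icc]
  omega

lemma Kfun_top (he : ∀ ℓ ℓ', 1 ≤ ℓ → ℓ < ℓ' → ℓ' ≤ t + 1 → e ℓ < e ℓ') {i : Fin n} (h : e (t+1) ≤ i) : Kfun t e i = t + 1 := by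
  have hset : (Finset.Icc 1 (t+1)).filter (fun ℓ' => e ℓ' ≤ i) = Finset.Icc 1 (t+1) := by
    apply Finset.filter_true_of_mem
    intro ℓ' hℓ'
    simp only [Finset.mem_Icc] at hℓ'
    exact le_trans (e_le_e he hℓ'.1 hℓ'.2 le_rfl) h
  rw [Kfun, hset, Nat.card_Icc]
  omega

variable {Cu : Finset (Fin n)}

lemma alphaF_zero {i : Fin n} (hi : i ∉ Cu) : alphaF t e Cu i = 0 := by
  simp [alphaF, hi]

lemma alphaF_notE {i : Fin n} (hiCu : i ∈ Cu) (hne : i ≠ e (t+1))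
    (hni : i ∉ (Finset.Icc 2 t).image e) :
    alphaF t e Cu i = gfun t (Kfun t e i) := by
  simp [alphaF, hiCu, hne, hni]

lemma alphaF_lt1 (he : ∀ ℓ ℓ', 1 ≤ ℓ → ℓ < ℓ' → ℓ' ≤ t + 1 → e ℓ < e ℓ') (ht : 3 ≤ t) {i : Fin n} (hiCu : i ∈ Cu) (hi : i < e 1) :
    alphaF t e Cu i = 2*t - 1 := by
  have hne : i ≠ e (t+1) := ne_of_lt (lt_of_lt_of_le hi (e_le_e he le_rfl (by omega) le_rfl))
  have hni : i ∉ (Finset.Icc 2 t).image e := by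
    intro h
    obtain ⟨ℓ, hℓ, rfl⟩ := Finset.mem_image.mp h
    simp only [Finset.mem_Icc] at hℓ
    exact absurd hi (not_lt.mpr (e_le_e he le_rfl (by omega) (by omega)))
  rw [alphaF_notE hiCu hne hni, Kfun_zero he hi]
  simp [gfun]

lemma alphaF_in1 (he : ∀ ℓ ℓ', 1 ≤ ℓ → ℓ < ℓ' → ℓ' ≤ t + 1 → e ℓ < e ℓ') (ht : 3 ≤ t) {i : Fin n} (hiCu : i ∈ Cu) (h1 : e 1 ≤ i) (h2 : i < e 2) :
    alphaF t e Cu i = 2*t - 3 := by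
  have hne : i ≠ e (t+1) := ne_of_lt (lt_of_lt_of_le h2 (e_le_e he (by omega) (by omega) le_rfl))
  have hni : i ∉ (Finset.Icc 2 t).image e := by
    intro h
    obtain ⟨ℓ, hℓ, rfl⟩ := Finset.mem_image.mp h
    simp only [Finset.mem_Icc] at hℓ
    exact absurd h2 (not_lt.mpr (e_le_e he (by omega) hℓ.1 (by omega)))
  rw [alphaF_notE hiCu hne hni, Kfun_eq he le_rfl (by omega) h1 h2]
  simp [gfun, show ¬ (1 = 0) by omega]

lemma alphaF_mid (he : ∀ ℓ ℓ', 1 ≤ ℓ → ℓ < ℓ' → ℓ' ≤ t + 1 → e ℓ < e ℓ') (ht : 3 ≤ t) {i : Fin n} {ℓ : ℕ} (hℓ1 : 2 ≤ ℓ) (hℓ2 : ℓ ≤ t)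
    (hiCu : i ∈ Cu) (h1 : e ℓ < i) (h2 : i < e (ℓ+1)) :
    alphaF t e Cu i = gfun t ℓ := by
  have hne : i ≠ e (t+1) := ne_of_lt (lt_of_lt_of_le h2 (e_le_e he (by omega) (by omega) le_rfl))
  have hni : i ∉ (Finset.Icc 2 t).image e := by
    intro h
    obtain ⟨ℓ', hℓ', rfl⟩ := Finset.mem_image.mp h
    simp only [Finset.mem_Icc] at hℓ'
    rcases Nat.lt_or_ge ℓ' (ℓ+1) with h | h
    · exact absurd h1 (not_lt.mpr (e_le_e he (by omega) (by omega) (by omega)))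
    · exact absurd h2 (not_lt.mpr (e_le_e he (by omega) h (by omega)))
  rw [alphaF_notE hiCu hne hni, Kfun_eq he (by omega) hℓ2 (le_of_lt h1) h2]

lemma alphaF_e (he : ∀ ℓ ℓ', 1 ≤ ℓ → ℓ < ℓ' → ℓ' ≤ t + 1 → e ℓ < e ℓ') (ht : 3 ≤ t) {ℓ : ℕ} (hℓ : ℓ ∈ Finset.Icc 2 t) (hCu : e ℓ ∈ Cu) :
    alphaF t e Cu (e ℓ) = 2 := by
  simp only [Finset.mem_Icc] at hℓ
  have hne : e ℓ ≠ e (t+1) := ne_of_lt (he ℓ (t+1) (by omega) (by omega) le_rfl)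
  have hni : e ℓ ∈ (Finset.Icc 2 t).image e :=
    Finset.mem_image.mpr ⟨ℓ, Finset.mem_Icc.mpr hℓ, rfl⟩
  simp [alphaF, hCu, hne, hni]

lemma alphaF_etop (hCu : e (t+1) ∈ Cu) :
    alphaF t e Cu (e (t+1)) = 1 := by
  simp [alphaF, hCu]

lemma alphaF_gt (he : ∀ ℓ ℓ', 1 ≤ ℓ → ℓ < ℓ' → ℓ' ≤ t + 1 → e ℓ < e ℓ') (ht : 3 ≤ t) {i : Fin n} (hiCu : i ∈ Cu) (h : e (t+1) < i) :
    alphaF t e Cu i = 2 := by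
  have hne : i ≠ e (t+1) := (ne_of_lt h).symm
  have hni : i ∉ (Finset.Icc 2 t).image e := by
    intro hmem
    obtain ⟨ℓ', hℓ', rfl⟩ := Finset.mem_image.mp hmem
    simp only [Finset.mem_Icc] at hℓ'
    exact absurd h (not_lt.mpr (e_le_e he (by omega) (by omega) le_rfl))
  rw [alphaF_notE hiCu hne hni, Kfun_top he (le_of_lt h)]
  simp [gfun, show ¬ (t+1 = 0) by omega, show ¬ (t+1 = 1) by omega, show ¬ (t+1+1 ≤ t) by omega, show ¬ (t = 0) by omega]

end KL

set_option maxHeartbeats 1000000 in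
lemma bridge {n : ℕ} (t : ℕ) (ht : 3 ≤ t) (e : ℕ → Fin n)
    (he : ∀ ℓ ℓ', 1 ≤ ℓ → ℓ < ℓ' → ℓ' ≤ t + 1 → e ℓ < e ℓ')
    (Cu : Finset (Fin n)) (hCu : ∀ ℓ ∈ Finset.Icc 1 (t+1), e ℓ ∈ Cu)
    (x : Fin n → ℤ) :
    (∑ i ∈ Cu.filter (fun i => i < e 1), (2 * (t : ℤ) - 1) * x i) +
    (∑ i ∈ Cu.filter (fun i => e 1 ≤ i ∧ i < e 2), (2 * (t : ℤ) - 3) * x i) +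
    (∑ ℓ ∈ Finset.Icc 3 t, ∑ i ∈ Cu.filter (fun i => e (ℓ - 1) < i ∧ i < e ℓ),
      (2 * (t : ℤ) - 2 * (ℓ : ℤ) + 3) * x i) +
    (∑ ℓ ∈ Finset.Icc 2 t, 2 * x (e ℓ)) +
    (∑ i ∈ Cu.filter (fun i => e t < i ∧ i < e (t + 1)), 2 * x i) +
    x (e (t + 1)) +
    (∑ i ∈ Cu.filter (fun i => e (t + 1) < i), 2 * x i)
    = ∑ i, alphaF t e Cu i * x i := by
  have he12 : e 1 < e 2 := he 1 2 le_rfl one_lt_two (by omega)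
  -- restrict to Cu
  have h0 : ∑ i, alphaF t e Cu i * x i = ∑ i ∈ Cu, alphaF t e Cu i * x i := by
    rw [← Finset.sum_subset (Finset.subset_univ Cu)]
    intro i _ hi
    rw [alphaF_zero hi, zero_mul]
  rw [h0]
  -- first split : below e 1
  rw [← Finset.sum_filter_add_sum_filter_not Cu (fun i => i < e 1) (fun i => alphaF t e Cu i * x i)]
  -- second split : below e 2
  rw [← Finset.sum_filter_add_sum_filter_not (Cu.filter (fun i => ¬ i < e 1))
    (fun i => i < e 2) (fun i => alphaF t e Cu i * x i)]
  rw [Finset.filter_filter, Finset.filter_filter]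
  -- third split : below e (t+1)
  rw [show Cu.filter (fun i => ¬ i < e 1 ∧ ¬ i < e 2) = Cu.filter (fun i => e 2 ≤ i) by
    apply Finset.filter_congr
    intro i _
    simp only [not_lt, eq_iff_iff]
    constructor
    · exact fun h => h.2
    · exact fun h => ⟨le_trans (le_of_lt he12) h, h⟩]
  rw [← Finset.sum_filter_add_sum_filter_not (Cu.filter (fun i => e 2 ≤ i))
    (fun i => i < e (t+1)) (fun i => alphaF t e Cu i * x i)]
  rw [Finset.filter_filter, Finset.filter_filter]
  -- split the top part into e(t+1) and beyond
  rw [show Cu.filter (fun i => e 2 ≤ i ∧ ¬ i < e (t+1)) = Cu.filter (fun i => e (t+1) ≤ i) by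
    apply Finset.filter_congr
    intro i _
    simp only [not_lt, eq_iff_iff]
    constructor
    · exact fun h => h.2
    · intro h
      exact ⟨le_trans (le_of_lt (he 2 (t+1) (by omega) (by omega) le_rfl)) h, h⟩]
  rw [← Finset.sum_filter_add_sum_filter_not (Cu.filter (fun i => e (t+1) ≤ i))
    (fun i => e (t+1) < i) (fun i => alphaF t e Cu i * x i)]
  rw [Finset.filter_filter, Finset.filter_filter]
  rw [show Cu.filter (fun i => e (t+1) ≤ i ∧ e (t+1) < i) = Cu.filter (fun i => e (t+1) < i) by
    apply Finset.filter_congr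
    intro i _
    exact ⟨fun h => h.2, fun h => ⟨le_of_lt h, h⟩⟩]
  rw [show Cu.filter (fun i => e (t+1) ≤ i ∧ ¬ e (t+1) < i) = {e (t+1)} by
    ext i
    simp only [Finset.mem_filter, Finset.mem_singleton, not_lt]
    constructor
    · rintro ⟨_, h1, h2⟩
      exact le_antisymm h2 h1
    · rintro rfl
      exact ⟨hCu (t+1) (Finset.mem_Icc.mpr ⟨by omega, le_rfl⟩), le_rfl, le_rfl⟩]
  rw [Finset.sum_singleton]
  -- the middle : biUnion decomposition
  have hmid : Cu.filter (fun i => e 2 ≤ i ∧ i < e (t+1)) =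
      (Finset.Icc 2 t).biUnion (fun ℓ => Cu.filter (fun i => e ℓ ≤ i ∧ i < e (ℓ+1))) := by
    ext i
    simp only [Finset.mem_filter, Finset.mem_biUnion, Finset.mem_Icc]
    constructor
    · rintro ⟨hiCu, h2, ht1⟩
      -- take the largest ℓ in [2,t] with e ℓ ≤ i
      have hne : ((Finset.Icc 2 t).filter (fun ℓ => e ℓ ≤ i)).Nonempty :=
        ⟨2, Finset.mem_filter.mpr ⟨Finset.mem_Icc.mpr ⟨le_rfl, by omega⟩, h2⟩⟩
      obtain ⟨ℓ, hℓmem, hℓmax⟩ := Finset.exists_max_image _ id hne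
      obtain ⟨hℓIcc, hℓle⟩ := Finset.mem_filter.mp hℓmem
      simp only [Finset.mem_Icc] at hℓIcc
      refine ⟨ℓ, ⟨hℓIcc.1, hℓIcc.2⟩, hiCu, hℓle, ?_⟩
      by_cases hℓt : ℓ = t
      · rw [hℓt]; exact ht1
      · by_contra hcon
        push_neg at hcon
        have : ℓ + 1 ∈ (Finset.Icc 2 t).filter (fun ℓ => e ℓ ≤ i) :=
          Finset.mem_filter.mpr ⟨Finset.mem_Icc.mpr ⟨by omega, by omega⟩, hcon⟩
        have := hℓmax (ℓ+1) this
        simp at this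
    · rintro ⟨ℓ, hℓ, hiCu, h1, h2⟩
      refine ⟨hiCu, le_trans (e_le_e he one_le_two hℓ.1 (by omega)) h1,
        lt_of_lt_of_le h2 (e_le_e he (by omega) (by omega) le_rfl)⟩
  rw [hmid]
  rw [Finset.sum_biUnion (by
    intro a ha b hb hab
    simp only [Finset.coe_Icc, Set.mem_Icc] at ha hb
    apply Finset.disjoint_left.mpr
    intro i hia hib
    obtain ⟨_, ha1, ha2⟩ := Finset.mem_filter.mp hia
    obtain ⟨_, hb1, hb2⟩ := Finset.mem_filter.mp hib
    rcases Nat.lt_or_ge a b with h | h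
    · exact absurd (lt_of_lt_of_le ha2 (le_trans (e_le_e he (by omega) h (by omega)) hb1))
        (lt_irrefl i)
    · have h' : b < a := by omega
      exact absurd (lt_of_lt_of_le hb2 (le_trans (e_le_e he (by omega) h' (by omega)) ha1))
        (lt_irrefl i))]
  -- per-ℓ decomposition
  have hper : ∀ ℓ ∈ Finset.Icc 2 t,
      ∑ i ∈ Cu.filter (fun i => e ℓ ≤ i ∧ i < e (ℓ+1)), alphaF t e Cu i * x i
      = 2 * x (e ℓ) + ∑ i ∈ Cu.filter (fun i => e ℓ < i ∧ i < e (ℓ+1)), alphaF t e Cu i * x i := by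
    intro ℓ hℓ
    have hℓ' := Finset.mem_Icc.mp hℓ
    have heℓ : e ℓ < e (ℓ+1) := he ℓ (ℓ+1) (by omega) (by omega) (by omega)
    rw [← Finset.sum_filter_add_sum_filter_not (Cu.filter (fun i => e ℓ ≤ i ∧ i < e (ℓ+1)))
      (fun i => e ℓ < i) (fun i => alphaF t e Cu i * x i)]
    rw [Finset.filter_filter, Finset.filter_filter]
    rw [show Cu.filter (fun i => (e ℓ ≤ i ∧ i < e (ℓ+1)) ∧ ¬ e ℓ < i) = {e ℓ} by
      ext i
      simp only [Finset.mem_filter, Finset.mem_singleton, not_lt]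
      constructor
      · rintro ⟨_, ⟨h1, _⟩, h2⟩
        exact le_antisymm h2 h1
      · rintro rfl
        exact ⟨hCu ℓ (Finset.mem_Icc.mpr ⟨by omega, by omega⟩), ⟨le_rfl, heℓ⟩, le_rfl⟩]
    rw [show Cu.filter (fun i => (e ℓ ≤ i ∧ i < e (ℓ+1)) ∧ e ℓ < i)
        = Cu.filter (fun i => e ℓ < i ∧ i < e (ℓ+1)) by
      apply Finset.filter_congr
      intro i _
      exact ⟨fun h => ⟨h.2, h.1.2⟩, fun h => ⟨⟨le_of_lt h.1, h.2⟩, h.1⟩⟩]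
    rw [Finset.sum_singleton, alphaF_e he ht hℓ (hCu ℓ (Finset.mem_Icc.mpr ⟨by omega, by omega⟩))]
    ring
  rw [Finset.sum_congr rfl hper, Finset.sum_add_distrib]
  -- split off ℓ = t from the interval sums
  have hsplit_t : ∑ ℓ ∈ Finset.Icc 2 t,
      (∑ i ∈ Cu.filter (fun i => e ℓ < i ∧ i < e (ℓ+1)), alphaF t e Cu i * x i)
      = (∑ ℓ ∈ Finset.Icc 2 (t-1),
          ∑ i ∈ Cu.filter (fun i => e ℓ < i ∧ i < e (ℓ+1)), alphaF t e Cu i * x i)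
        + ∑ i ∈ Cu.filter (fun i => e t < i ∧ i < e (t+1)), alphaF t e Cu i * x i := by
    rw [show Finset.Icc 2 t = insert t (Finset.Icc 2 (t-1)) by
      ext ℓ
      simp only [Finset.mem_insert, Finset.mem_Icc]
      omega]
    rw [Finset.sum_insert (by simp only [Finset.mem_Icc]; omega)]
    ring
  rw [hsplit_t]
  -- values on each region
  have hv1 : ∑ i ∈ Cu.filter (fun i => i < e 1), alphaF t e Cu i * x i
      = ∑ i ∈ Cu.filter (fun i => i < e 1), (2 * (t:ℤ) - 1) * x i := by
    apply Finset.sum_congr rfl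
    intro i hi
    obtain ⟨hiCu, hilt⟩ := Finset.mem_filter.mp hi
    rw [alphaF_lt1 he ht hiCu hilt]
  have hv2 : ∑ i ∈ Cu.filter (fun i => ¬ i < e 1 ∧ i < e 2), alphaF t e Cu i * x i
      = ∑ i ∈ Cu.filter (fun i => e 1 ≤ i ∧ i < e 2), (2 * (t:ℤ) - 3) * x i := by
    rw [show Cu.filter (fun i => ¬ i < e 1 ∧ i < e 2) = Cu.filter (fun i => e 1 ≤ i ∧ i < e 2) by
      apply Finset.filter_congr
      intro i _
      simp only [not_lt]]
    apply Finset.sum_congr rfl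
    intro i hi
    obtain ⟨hiCu, h1, h2⟩ := Finset.mem_filter.mp hi
    rw [alphaF_in1 he ht hiCu h1 h2]
  have hv5 : ∑ i ∈ Cu.filter (fun i => e t < i ∧ i < e (t+1)), alphaF t e Cu i * x i
      = ∑ i ∈ Cu.filter (fun i => e t < i ∧ i < e (t+1)), 2 * x i := by
    apply Finset.sum_congr rfl
    intro i hi
    obtain ⟨hiCu, h1, h2⟩ := Finset.mem_filter.mp hi
    rw [alphaF_mid he ht (by omega) le_rfl hiCu h1 h2]
    norm_num [gfun, show ¬ (t = 0) by omega, show ¬ (t = 1) by omega, show ¬ (t+1 ≤ t) by omega]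
  have hv6 : ∑ i ∈ Cu.filter (fun i => e (t+1) < i), alphaF t e Cu i * x i
      = ∑ i ∈ Cu.filter (fun i => e (t+1) < i), 2 * x i := by
    apply Finset.sum_congr rfl
    intro i hi
    obtain ⟨hiCu, h1⟩ := Finset.mem_filter.mp hi
    rw [alphaF_gt he ht hiCu h1]
  have hvtop : alphaF t e Cu (e (t+1)) * x (e (t+1)) = x (e (t+1)) := by
    rw [alphaF_etop (hCu (t+1) (Finset.mem_Icc.mpr ⟨by omega, le_rfl⟩))]
    ring
  -- reindex the middle intervals
  have hre : ∑ ℓ ∈ Finset.Icc 2 (t-1),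
      (∑ i ∈ Cu.filter (fun i => e ℓ < i ∧ i < e (ℓ+1)), alphaF t e Cu i * x i)
      = ∑ ℓ ∈ Finset.Icc 3 t, ∑ i ∈ Cu.filter (fun i => e (ℓ-1) < i ∧ i < e ℓ),
          (2 * (t:ℤ) - 2 * (ℓ:ℤ) + 3) * x i := by
    rw [show Finset.Icc 3 t = (Finset.Icc 2 (t-1)).image (· + 1) by
      ext ℓ
      simp only [Finset.mem_image, Finset.mem_Icc]
      constructor
      · rintro ⟨h1, h2⟩
        exact ⟨ℓ - 1, ⟨by omega, by omega⟩, by omega⟩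
      · rintro ⟨m, ⟨h1, h2⟩, rfl⟩
        omega]
    rw [Finset.sum_image (by intro a _ b _ h; simp only at h; omega)]
    apply Finset.sum_congr rfl
    intro ℓ hℓ
    have hℓ' := Finset.mem_Icc.mp hℓ
    have hsimp : ℓ + 1 - 1 = ℓ := rfl
    rw [hsimp]
    apply Finset.sum_congr rfl
    intro i hi
    obtain ⟨hiCu, h1, h2⟩ := Finset.mem_filter.mp hi
    rw [alphaF_mid he ht (by omega) (by omega) hiCu h1 h2]
    have : gfun t ℓ = 2 * (t:ℤ) - 2 * ((ℓ+1 : ℕ):ℤ) + 3 := by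
      rw [gfun]
      rw [if_neg (by omega), if_neg (by omega), if_pos (by omega)]
      push_cast
      ring
    rw [this]
  rw [hv1, hv2, hv5, hv6, hvtop, hre]
  ring
/-- for covers `C₁ = C₀ ∪ {i₁, i_{t+1}}` and `C₂ = C₀ ∪ {i₂,…,i_t}`
(with `i₁ < … < i_{t+1}` outside `C₀`, encoded as `e 1 < … < e (t+1)`), `{C₁, C₂}`
is a multi-cover and the stated closed-form MCI is valid for `K`. -/
theorem example_mci_two_rest {m n : ℕ} (A : Fin m → Fin n → ℕ) (b : Fin m → ℕ)
    (hA : ColsOrdered A)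
    (C₀ : Finset (Fin n)) (t : ℕ) (ht : 3 ≤ t)
    (e : ℕ → Fin n) (hmono : StrictMonoOn e (Set.Icc 1 (t + 1)))
    (hout : ∀ ℓ ∈ Finset.Icc 1 (t + 1), e ℓ ∉ C₀)
    (C₁ C₂ Cu : Finset (Fin n))
    (hC₁ : C₁ = insert (e 1) (insert (e (t + 1)) C₀))
    (hC₂ : C₂ = C₀ ∪ (Finset.Icc 2 t).image e)
    (hCu : Cu = C₁ ∪ C₂)
    (hcov1 : IsCover A b C₁) (hcov2 : IsCover A b C₂)
    (lhs : (Fin n → ℤ) → ℤ)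
    (hlhs : ∀ x : Fin n → ℤ, lhs x =
      (∑ i ∈ Cu.filter (fun i => i < e 1), (2 * (t : ℤ) - 1) * x i) +
      (∑ i ∈ Cu.filter (fun i => e 1 ≤ i ∧ i < e 2), (2 * (t : ℤ) - 3) * x i) +
      (∑ ℓ ∈ Finset.Icc 3 t, ∑ i ∈ Cu.filter (fun i => e (ℓ - 1) < i ∧ i < e ℓ),
        (2 * (t : ℤ) - 2 * (ℓ : ℤ) + 3) * x i) +
      (∑ ℓ ∈ Finset.Icc 2 t, 2 * x (e ℓ)) +
      (∑ i ∈ Cu.filter (fun i => e t < i ∧ i < e (t + 1)), 2 * x i) +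
      x (e (t + 1)) +
      (∑ i ∈ Cu.filter (fun i => e (t + 1) < i), 2 * x i))
    (β : ℤ) (hβ : β = lhs (fun i => if i ∈ C₁ then 1 else 0) - 1) :
    MultiCover A b ![C₁, C₂] ∧
    ∀ x : Fin n → ℤ, (∀ i, x i = 0 ∨ x i = 1) →
      (∀ j, ∑ i, (A j i : ℤ) * x i ≤ (b j : ℤ)) → lhs x ≤ β := by  classical
  have he : ∀ ℓ ℓ', 1 ≤ ℓ → ℓ < ℓ' → ℓ' ≤ t + 1 → e ℓ < e ℓ' := by
    intro ℓ ℓ' h1 h2 h3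
    exact hmono (Set.mem_Icc.mpr ⟨h1, by omega⟩) (Set.mem_Icc.mpr ⟨by omega, h3⟩) h2
  have ht' : 3 ≤ t := ht
  have he1t1 : e 1 < e (t+1) := he 1 (t+1) le_rfl (by omega) le_rfl
  have he1ne : e 1 ≠ e (t+1) := ne_of_lt he1t1
  have heE : ∀ ℓ, 1 ≤ ℓ → ℓ ≤ t+1 → e ℓ ∉ C₀ :=
    fun ℓ h1 h2 => hout ℓ (Finset.mem_Icc.mpr ⟨h1, h2⟩)
  have he1C₀ : e 1 ∉ C₀ := heE 1 le_rfl (by omega)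
  have het1C₀ : e (t+1) ∉ C₀ := heE (t+1) (by omega) le_rfl
  set E : Finset (Fin n) := (Finset.Icc 1 (t+1)).image e with hE
  have hEtop : ∀ i ∈ E, i ≤ e (t+1) := by
    intro i hi
    obtain ⟨ℓ, hℓ, rfl⟩ := Finset.mem_image.mp hi
    simp only [Finset.mem_Icc] at hℓ
    exact e_le_e he hℓ.1 hℓ.2 le_rfl
  have hEbot : ∀ i ∈ E, e 1 ≤ i := by
    intro i hi
    obtain ⟨ℓ, hℓ, rfl⟩ := Finset.mem_image.mp hi
    simp only [Finset.mem_Icc] at hℓ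
    exact e_le_e he le_rfl hℓ.1 hℓ.2
  have hdisj : Disjoint C₀ E := by
    rw [Finset.disjoint_left]
    intro i hi hiE
    obtain ⟨ℓ, hℓ, rfl⟩ := Finset.mem_image.mp hiE
    simp only [Finset.mem_Icc] at hℓ
    exact heE ℓ hℓ.1 hℓ.2 hi
  have hCuE : Cu = C₀ ∪ E := by
    rw [hCu, hC₁, hC₂, hE]
    ext i
    simp only [Finset.mem_union, Finset.mem_insert, Finset.mem_image, Finset.mem_Icc]
    constructor
    · rintro ((rfl | rfl | h) | (h | h))
      · exact Or.inr ⟨1, ⟨le_rfl, by omega⟩, rfl⟩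
      · exact Or.inr ⟨t+1, ⟨by omega, le_rfl⟩, rfl⟩
      · exact Or.inl h
      · exact Or.inl h
      · obtain ⟨ℓ, hℓ, rfl⟩ := h
        exact Or.inr ⟨ℓ, ⟨by omega, by omega⟩, rfl⟩
    · rintro (h | ⟨ℓ, ⟨h1, h2⟩, rfl⟩)
      · exact Or.inl (Or.inr (Or.inr h))
      · rcases Nat.eq_or_lt_of_le h1 with h | h
        · exact Or.inl (Or.inl (by rw [← h]))
        · rcases Nat.eq_or_lt_of_le h2 with h' | h'
          · exact Or.inl (Or.inr (Or.inl (by rw [h'])))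
          · exact Or.inr (Or.inr ⟨ℓ, ⟨by omega, by omega⟩, rfl⟩)
  have hCuC : ∀ ℓ ∈ Finset.Icc 1 (t+1), e ℓ ∈ Cu := by
    intro ℓ hℓ
    rw [hCuE]
    exact Finset.mem_union_right _ (Finset.mem_image.mpr ⟨ℓ, hℓ, rfl⟩)
  have hinter : interC ![C₁, C₂] = C₀ := by
    have h1 : interC ![C₁, C₂] = C₁ ∩ C₂ := by
      rw [interC, show (Finset.univ : Finset (Fin 2)) = {0, 1} from rfl]
      simp
    rw [h1]
    ext i
    simp only [Finset.mem_inter]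
    constructor
    · rintro ⟨hi1, hi2⟩
      rw [hC₁] at hi1
      rcases Finset.mem_insert.mp hi1 with rfl | hi1
      · exfalso
        rw [hC₂] at hi2
        rcases Finset.mem_union.mp hi2 with h | h
        · exact he1C₀ h
        · obtain ⟨ℓ, hℓ, hh⟩ := Finset.mem_image.mp h
          simp only [Finset.mem_Icc] at hℓ
          exact absurd hh.symm (ne_of_lt (he 1 ℓ le_rfl (by omega) (by omega)))
      rcases Finset.mem_insert.mp hi1 with rfl | hi1
      · exfalso
        rw [hC₂] at hi2
        rcases Finset.mem_union.mp hi2 with h | h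
        · exact het1C₀ h
        · obtain ⟨ℓ, hℓ, hh⟩ := Finset.mem_image.mp h
          simp only [Finset.mem_Icc] at hℓ
          exact absurd hh (ne_of_lt (he ℓ (t+1) (by omega) (by omega) le_rfl))
      · exact hi1
    · intro hi
      constructor
      · rw [hC₁]; exact Finset.mem_insert_of_mem (Finset.mem_insert_of_mem hi)
      · rw [hC₂]; exact Finset.mem_union_left _ hi
  have hmat0 : C₁ \ interC ![C₁, C₂] = ({e 1, e (t+1)} : Finset (Fin n)) := by
    rw [hinter, hC₁]
    ext i
    simp only [Finset.mem_sdiff, Finset.mem_insert, Finset.mem_singleton]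
    constructor
    · rintro ⟨rfl | rfl | h, hn⟩
      · exact Or.inl rfl
      · exact Or.inr rfl
      · exact absurd h hn
    · rintro (rfl | rfl)
      · exact ⟨Or.inl rfl, he1C₀⟩
      · exact ⟨Or.inr (Or.inl rfl), het1C₀⟩
  have hmat1 : C₂ \ interC ![C₁, C₂] = (Finset.Icc 2 t).image e := by
    rw [hinter, hC₂]
    ext i
    simp only [Finset.mem_sdiff, Finset.mem_union]
    constructor
    · rintro ⟨h | h, hn⟩
      · exact absurd h hn
      · exact h
    · intro h
      refine ⟨Or.inr h, ?_⟩
      obtain ⟨ℓ, hℓ, rfl⟩ := Finset.mem_image.mp h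
      simp only [Finset.mem_Icc] at hℓ
      exact heE ℓ (by omega) (by omega)
  have hunionE : unionC ![C₁, C₂] \ interC ![C₁, C₂] = E := by
    have h1 : unionC ![C₁, C₂] = C₁ ∪ C₂ := by
      rw [unionC, show (Finset.univ : Finset (Fin 2)) = {0, 1} from rfl]
      simp
    rw [h1, hinter, ← hCu, hCuE, Finset.union_sdiff_distrib]
    rw [Finset.sdiff_self, Finset.sdiff_eq_self_iff_disjoint.mpr hdisj.symm]
    simp
  constructor
  · -- part (a) : multi-cover
    constructor
    · intro h
      fin_cases h
      · exact hcov1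
      · exact hcov2
    · intro T hTsub _
      rw [hunionE] at hTsub
      by_cases ha : e 1 ∈ T
      · by_cases hw : ∃ w ∈ T, w ≠ e 1
        · obtain ⟨w, hwT, hwne⟩ := hw
          refine ⟨0, Or.inl ?_⟩
          show Dominates T (C₁ \ interC ![C₁, C₂])
          rw [hmat0]
          refine ⟨fun i => if i = e (t+1) then w else i, ?_, ?_⟩
          · intro a ha' b hb' hab
            simp only [Finset.coe_insert, Set.mem_insert_iff, Finset.coe_singleton,
              Set.mem_singleton_iff] at ha' hb'
            rcases ha' with rfl | rfl <;> rcases hb' with rfl | rfl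
            · rfl
            · beta_reduce at hab
              rw [if_neg he1ne, if_pos rfl] at hab
              exact absurd hab.symm hwne
            · beta_reduce at hab
              rw [if_neg he1ne, if_pos rfl] at hab
              exact absurd hab hwne
            · rfl
          · intro i hi
            rcases Finset.mem_insert.mp hi with rfl | hi
            · beta_reduce
              rw [if_neg he1ne]
              exact ⟨ha, le_rfl⟩
            · rw [Finset.mem_singleton] at hi
              subst hi
              beta_reduce
              rw [if_pos rfl]
              exact ⟨hwT, hEtop w (hTsub hwT)⟩
        · push_neg at hw
          refine ⟨0, Or.inr ?_⟩
          show Dominates (C₁ \ interC ![C₁, C₂]) T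
          rw [hmat0]
          exact dom_of_subset _ _ (fun i hi => by
            rw [hw i hi]; exact Finset.mem_insert_self _ _)
      · by_cases hsub2 : (Finset.Icc 2 t).image e ⊆ T
        · refine ⟨1, Or.inl ?_⟩
          show Dominates T (C₂ \ interC ![C₁, C₂])
          rw [hmat1]
          exact dom_of_subset _ _ hsub2
        · obtain ⟨w, hwimg, hwT⟩ := Finset.not_subset.mp hsub2
          refine ⟨1, Or.inr ?_⟩
          show Dominates (C₂ \ interC ![C₁, C₂]) T
          rw [hmat1]
          have hTimg : ∀ i ∈ T, i ≠ e (t+1) → i ∈ (Finset.Icc 2 t).image e := by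
            intro i hi hine
            obtain ⟨ℓ, hℓ, rfl⟩ := Finset.mem_image.mp (hTsub hi)
            simp only [Finset.mem_Icc] at hℓ
            have h1 : ℓ ≠ 1 := by
              rintro rfl
              exact ha hi
            have h2 : ℓ ≠ t+1 := by
              rintro rfl
              exact hine rfl
            exact Finset.mem_image.mpr ⟨ℓ, Finset.mem_Icc.mpr ⟨by omega, by omega⟩, rfl⟩
          refine ⟨fun i => if i = e (t+1) then w else i, ?_, ?_⟩
          · intro a ha' b hb' hab
            simp only [Finset.mem_coe] at ha' hb'
            beta_reduce at hab
            by_cases hae : a = e (t+1) <;> by_cases hbe : b = e (t+1)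
            · rw [hae, hbe]
            · exfalso
              rw [if_pos hae, if_neg hbe] at hab
              rw [hab] at hwT
              exact hwT hb'
            · exfalso
              rw [if_neg hae, if_pos hbe] at hab
              rw [← hab] at hwT
              exact hwT ha'
            · rwa [if_neg hae, if_neg hbe] at hab
          · intro i hi
            by_cases hieq : i = e (t+1)
            · subst hieq
              beta_reduce
              rw [if_pos rfl]
              refine ⟨hwimg, ?_⟩
              obtain ⟨ℓ, hℓ, rfl⟩ := Finset.mem_image.mp hwimg
              simp only [Finset.mem_Icc] at hℓ
              exact e_le_e he (by omega) (by omega) le_rfl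
            · beta_reduce
              rw [if_neg hieq]
              exact ⟨hTimg i hi hieq, le_rfl⟩
  · -- part (b) : validity
    intro x hx hfeas
    set S : Finset (Fin n) := Finset.univ.filter (fun i => x i = 1) with hS
    have hxS : ∀ i, x i = if i ∈ S then 1 else 0 := by
      intro i
      by_cases h : i ∈ S
      · rw [if_pos h]
        exact (Finset.mem_filter.mp h).2
      · rw [if_neg h]
        rcases hx i with h0 | h1
        · exact h0
        · exact absurd (Finset.mem_filter.mpr ⟨Finset.mem_univ i, h1⟩) h
    have hfeasN : ∀ j, ∑ i ∈ S, A j i ≤ b j := by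
      intro j
      have h := hfeas j
      have h2 : ∑ i, (A j i : ℤ) * x i = ((∑ i ∈ S, A j i : ℕ) : ℤ) := by
        push_cast
        calc ∑ i, (A j i : ℤ) * x i = ∑ i ∈ S, (A j i : ℤ) * x i := by
              rw [← Finset.sum_subset (Finset.subset_univ S)]
              intro i _ hi
              rw [hxS i, if_neg hi, mul_zero]
          _ = ∑ i ∈ S, (A j i : ℤ) := Finset.sum_congr rfl (fun i hi => by
              rw [hxS i, if_pos hi, mul_one])
      rw [h2] at h
      exact_mod_cast h
    have hnd1 : ∃ p : Fin n, (S.filter (· ≤ p)).card < (C₁.filter (· ≤ p)).card := by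
      apply exists_counting_violation
      intro hdom
      exact infeasible_of_dominates_cover hA hdom hcov1 hfeasN
    have hnd2 : ∃ p : Fin n, (S.filter (· ≤ p)).card < (C₂.filter (· ≤ p)).card := by
      apply exists_counting_violation
      intro hdom
      exact infeasible_of_dominates_cover hA hdom hcov2 hfeasN
    set M : Finset (Fin n) := C₀ \ S with hM
    set T : Finset (Fin n) := S ∩ E with hTdef
    set S₀ : Finset (Fin n) := S ∩ C₀ with hS₀
    have hC0eq : C₀ = M ∪ S₀ := by
      rw [hM, hS₀]
      ext i
      simp only [Finset.mem_union, Finset.mem_sdiff, Finset.mem_inter]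
      tauto
    have hdisjMS : Disjoint M S₀ := by
      rw [Finset.disjoint_left]
      intro i hi hi2
      exact (Finset.mem_sdiff.mp hi).2 (Finset.mem_inter.mp hi2).1
    have hcntC0 : ∀ p : Fin n, (C₀.filter (· ≤ p)).card
        = (M.filter (· ≤ p)).card + (S₀.filter (· ≤ p)).card := by
      intro p
      conv_lhs => rw [hC0eq]
      rw [Finset.filter_union, Finset.card_union_of_disjoint
        (Finset.disjoint_filter_filter hdisjMS)]
    have hcntS : ∀ p : Fin n, (S₀.filter (· ≤ p)).card + (T.filter (· ≤ p)).card
        ≤ (S.filter (· ≤ p)).card := by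
      intro p
      have hsub : S₀.filter (· ≤ p) ∪ T.filter (· ≤ p) ⊆ S.filter (· ≤ p) := by
        intro i hi
        rcases Finset.mem_union.mp hi with hi | hi
        · exact Finset.mem_filter.mpr ⟨(Finset.mem_inter.mp (Finset.mem_filter.mp hi).1).1,
            (Finset.mem_filter.mp hi).2⟩
        · exact Finset.mem_filter.mpr ⟨(Finset.mem_inter.mp (Finset.mem_filter.mp hi).1).1,
            (Finset.mem_filter.mp hi).2⟩
      have hdisjST : Disjoint (S₀.filter (· ≤ p)) (T.filter (· ≤ p)) := by
        apply Finset.disjoint_filter_filter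
        rw [Finset.disjoint_left]
        intro i hi hi2
        exact Finset.disjoint_left.mp hdisj (Finset.mem_inter.mp hi).2
          (Finset.mem_inter.mp hi2).2
      rw [← Finset.card_union_of_disjoint hdisjST]
      exact Finset.card_le_card hsub
    have hcntC1 : ∀ p : Fin n, (C₁.filter (· ≤ p)).card =
        (C₀.filter (· ≤ p)).card
        + (({e 1, e (t+1)} : Finset (Fin n)).filter (· ≤ p)).card := by
      intro p
      have hC1eq : C₁ = C₀ ∪ ({e 1, e (t+1)} : Finset (Fin n)) := by
        rw [hC₁]
        ext i
        simp only [Finset.mem_insert, Finset.mem_union, Finset.mem_singleton]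
        tauto
      have hdisj1 : Disjoint C₀ ({e 1, e (t+1)} : Finset (Fin n)) := by
        rw [Finset.disjoint_right]
        intro i hi
        rcases Finset.mem_insert.mp hi with rfl | hi
        · exact he1C₀
        · rw [Finset.mem_singleton] at hi
          subst hi
          exact het1C₀
      rw [hC1eq, Finset.filter_union, Finset.card_union_of_disjoint
        (Finset.disjoint_filter_filter hdisj1)]
    have hcntC2 : ∀ p : Fin n, (C₂.filter (· ≤ p)).card =
        (C₀.filter (· ≤ p)).card + (((Finset.Icc 2 t).image e).filter (· ≤ p)).card := by
      intro p
      have hdisj2 : Disjoint C₀ ((Finset.Icc 2 t).image e) := by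
        rw [Finset.disjoint_right]
        intro i hi
        obtain ⟨ℓ, hℓ, rfl⟩ := Finset.mem_image.mp hi
        simp only [Finset.mem_Icc] at hℓ
        exact heE ℓ (by omega) (by omega)
      rw [hC₂, Finset.filter_union, Finset.card_union_of_disjoint
        (Finset.disjoint_filter_filter hdisj2)]
    have H1 : ∃ p : Fin n, (T.filter (· ≤ p)).card + 1 ≤ (M.filter (· ≤ p)).card
        + (({e 1, e (t+1)} : Finset (Fin n)).filter (· ≤ p)).card := by
      obtain ⟨p, hp⟩ := hnd1
      refine ⟨p, ?_⟩
      have h1 := hcntC1 p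
      have h2 := hcntC0 p
      have h3 := hcntS p
      omega
    have H2 : ∃ p : Fin n, (T.filter (· ≤ p)).card + 1 ≤ (M.filter (· ≤ p)).card
        + (((Finset.Icc 2 t).image e).filter (· ≤ p)).card := by
      obtain ⟨p, hp⟩ := hnd2
      refine ⟨p, ?_⟩
      have h1 := hcntC2 p
      have h2 := hcntC0 p
      have h3 := hcntS p
      omega
    have hTE : T ⊆ (Finset.Icc 1 (t+1)).image e := by
      intro i hi
      have h := (Finset.mem_inter.mp hi).2
      rwa [hE] at h
    have hα1v : alphaF t e Cu (e 1) = 2*(t:ℤ) - 3 :=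
      alphaF_in1 he ht' (hCuC 1 (Finset.mem_Icc.mpr ⟨le_rfl, by omega⟩)) le_rfl
        (he 1 2 le_rfl one_lt_two (by omega))
    have hα3v : alphaF t e Cu (e (t+1)) = 1 :=
      alphaF_etop (hCuC (t+1) (Finset.mem_Icc.mpr ⟨by omega, le_rfl⟩))
    have hα2v : ∀ ℓ ∈ Finset.Icc 2 t, alphaF t e Cu (e ℓ) = 2 := by
      intro ℓ hℓ
      have hℓ' := Finset.mem_Icc.mp hℓ
      exact alphaF_e he ht' hℓ (hCuC ℓ (Finset.mem_Icc.mpr ⟨by omega, by omega⟩))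
    have hαMv : ∀ i ∈ M, alphaF t e Cu i = gfun t (Kfun t e i) := by
      intro i hi
      have hiC₀ : i ∈ C₀ := (Finset.mem_sdiff.mp hi).1
      have hiCu : i ∈ Cu := by
        rw [hCuE]
        exact Finset.mem_union_left _ hiC₀
      have hne : i ≠ e (t+1) := fun h => het1C₀ (h ▸ hiC₀)
      have hni : i ∉ (Finset.Icc 2 t).image e := by
        intro h
        obtain ⟨ℓ, hℓ, rfl⟩ := Finset.mem_image.mp h
        simp only [Finset.mem_Icc] at hℓ
        exact heE ℓ (by omega) (by omega) hiC₀
      exact alphaF_notE hiCu hne hni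
    have hcore := core_mci t ht' e he (alphaF t e Cu) M T hTE (le_of_eq hα1v)
      (fun ℓ hℓ => le_of_eq (hα2v ℓ hℓ)) (le_of_eq hα3v)
      (fun i hi => le_of_eq (hαMv i hi).symm) H1 H2
    rw [hβ, hlhs x, hlhs (fun i => if i ∈ C₁ then 1 else 0)]
    rw [bridge t ht' e he Cu hCuC x,
      bridge t ht' e he Cu hCuC (fun i => if i ∈ C₁ then 1 else 0)]
    have hxsum : ∑ i, alphaF t e Cu i * x i = ∑ i ∈ S, alphaF t e Cu i := by
      calc ∑ i, alphaF t e Cu i * x i = ∑ i ∈ S, alphaF t e Cu i * x i := by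
            rw [← Finset.sum_subset (Finset.subset_univ S)]
            intro i _ hi
            rw [hxS i, if_neg hi, mul_zero]
        _ = ∑ i ∈ S, alphaF t e Cu i := Finset.sum_congr rfl (fun i hi => by
            rw [hxS i, if_pos hi, mul_one])
    have hχsum : ∑ i, alphaF t e Cu i * (if i ∈ C₁ then (1:ℤ) else 0)
        = ∑ i ∈ C₁, alphaF t e Cu i := by
      calc ∑ i, alphaF t e Cu i * (if i ∈ C₁ then (1:ℤ) else 0)
          = ∑ i ∈ C₁, alphaF t e Cu i * (if i ∈ C₁ then (1:ℤ) else 0) := by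
            rw [← Finset.sum_subset (Finset.subset_univ C₁)]
            intro i _ hi
            rw [if_neg hi, mul_zero]
        _ = ∑ i ∈ C₁, alphaF t e Cu i := Finset.sum_congr rfl (fun i hi => by
            rw [if_pos hi, mul_one])
    rw [hxsum, hχsum]
    have hC1sum : ∑ i ∈ C₁, alphaF t e Cu i
        = ∑ i ∈ C₀, alphaF t e Cu i + (2*(t:ℤ) - 3) + 1 := by
      have h1 : e 1 ∉ insert (e (t+1)) C₀ := by
        intro h
        rcases Finset.mem_insert.mp h with h | h
        · exact he1ne h
        · exact he1C₀ h
      rw [hC₁, Finset.sum_insert h1, Finset.sum_insert het1C₀, hα1v, hα3v]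
      ring
    have hC0sum : ∑ i ∈ C₀, alphaF t e Cu i
        = ∑ i ∈ M, alphaF t e Cu i + ∑ i ∈ S₀, alphaF t e Cu i := by
      conv_lhs => rw [hC0eq]
      exact Finset.sum_union hdisjMS
    have hSsum : ∑ i ∈ S, alphaF t e Cu i
        = ∑ i ∈ S₀, alphaF t e Cu i + ∑ i ∈ T, alphaF t e Cu i := by
      have hstep : ∑ i ∈ S, alphaF t e Cu i = ∑ i ∈ S ∩ Cu, alphaF t e Cu i := by
        rw [← Finset.sum_subset Finset.inter_subset_left]
        intro i hiS hiNot
        exact alphaF_zero (fun h => hiNot (Finset.mem_inter.mpr ⟨hiS, h⟩))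
      rw [hstep]
      have hsplit : S ∩ Cu = S₀ ∪ T := by
        rw [hS₀, hTdef, hCuE, Finset.inter_union_distrib_left]
      rw [hsplit]
      exact Finset.sum_union (by
        rw [Finset.disjoint_left]
        intro i hi hi2
        exact Finset.disjoint_left.mp hdisj (Finset.mem_inter.mp hi).2
          (Finset.mem_inter.mp hi2).2)
    linarith
end

section
/- Let K be a TOMKS in {0,1}^n whose set of minimal covers is exactly { {1,…,q} \ {p} } ∪ { {1,…,p} ∪ {j} : j = p+1,…,q }, where 1 ≤ p ≤ q − 2 and q ≤ n, and let πᵀx ≤ 1 be a non-trivial facet-defining inequality for the convex hull of K. Then π_i = 0 for every i ∈ {q+1,…,n}. -/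
open Finset

-- every cover contains a minimal cover
lemma cover_contains_minimal {m n : ℕ} (A : Fin m → Fin n → ℕ) (b : Fin m → ℕ) :
    ∀ S : Finset (Fin n), IsCover A b S → ∃ M ⊆ S, IsMinimalCover A b M := by
  intro S
  induction S using Finset.strongInduction with
  | _ S ih =>
    intro hS
    by_cases h : ∃ S' ⊂ S, IsCover A b S'
    · obtain ⟨S', hsub, hc⟩ := h
      obtain ⟨M, hM, hmin⟩ := ih S' hsub hc
      exact ⟨M, hM.trans hsub.subset, hmin⟩
    · push_neg at h
      exact ⟨S, subset_rfl, hS, h⟩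

-- the linear algebra lemma
lemma key_linalg {n : ℕ} (hn : 3 ≤ n) (pv : Fin n → ℝ) (i : Fin n)
    (pts : Fin n → (Fin n → ℝ)) (hai : AffineIndependent ℝ pts)
    (h1 : ∀ ℓ, pts ℓ i = 1) (h2 : ∀ ℓ, ∑ k, pv k * pts ℓ k = 1)
    (j : Fin n) (hji : j ≠ i) : pv j = 0 := by
  by_contra hj
  set f : (Fin n → ℝ) →ₗ[ℝ] ℝ × ℝ :=
    { toFun := fun v => (∑ k, pv k * v k, v i)
      map_add' := by
        intro v w
        simp [mul_add, Finset.sum_add_distrib, Prod.ext_iff]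
      map_smul' := by
        intro c v
        simp [Finset.mul_sum, Prod.ext_iff, mul_left_comm] } with hf
  have hfapp : ∀ v, f v = (∑ k, pv k * v k, v i) := fun v => rfl
  have hsurj : Function.Surjective f := by
    rintro ⟨a, c⟩
    set d : ℝ := (a - c * pv i) / pv j with hd
    set g : Fin n → ℝ := fun k => if k = i then c else if k = j then d else 0 with hg
    refine ⟨g, ?_⟩
    rw [hfapp]
    have hsum : ∑ k, pv k * g k = c * pv i + d * pv j := by
      have : ∀ k, pv k * g k = (if k = i then c * pv k else 0) + (if k = j then d * pv k else 0) := by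
        intro k
        rcases eq_or_ne k i with h | h
        · subst h; simp [hg, Ne.symm hji, mul_comm]
        · rcases eq_or_ne k j with h' | h'
          · subst h'; simp [hg, h, mul_comm]
          · simp [hg, h, h']
      rw [Finset.sum_congr rfl (fun k _ => this k), Finset.sum_add_distrib]
      simp [Finset.sum_ite_eq']
    rw [hsum]
    have hgi : g i = c := by simp [hg]
    rw [hgi]
    have : d * pv j = a - c * pv i := by
      rw [hd]; field_simp
    rw [this]
    simp [Prod.ext_iff]
  have hrange : LinearMap.range f = ⊤ := LinearMap.range_eq_top.mpr hsurj
  have hrank : Module.finrank ℝ (LinearMap.range f) + Module.finrank ℝ (LinearMap.ker f)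
      = Module.finrank ℝ (Fin n → ℝ) := LinearMap.finrank_range_add_finrank_ker f
  rw [hrange] at hrank
  have htop : Module.finrank ℝ (⊤ : Submodule ℝ (ℝ × ℝ)) = 2 := by
    rw [finrank_top]; simp [Module.finrank_prod]
  rw [htop, Module.finrank_fin_fun] at hrank
  -- linear independent family
  have hn0 : 0 < n := by omega
  set ℓ0 : Fin n := ⟨0, hn0⟩ with hℓ0
  have hli := (affineIndependent_iff_linearIndependent_vsub ℝ pts ℓ0).mp hai
  have hmem : ∀ ℓ : {x : Fin n // x ≠ ℓ0}, (pts ↑ℓ -ᵥ pts ℓ0) ∈ LinearMap.ker f := by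
    intro ℓ
    rw [LinearMap.mem_ker]
    have : pts ↑ℓ -ᵥ pts ℓ0 = pts ↑ℓ - pts ℓ0 := rfl
    rw [this, map_sub, hfapp, hfapp]
    have := h2 ℓ
    have := h2 ℓ0
    have := h1 ℓ
    have := h1 ℓ0
    simp_all [Prod.ext_iff]
  set w : {x : Fin n // x ≠ ℓ0} → LinearMap.ker f := fun ℓ => ⟨pts ↑ℓ -ᵥ pts ℓ0, hmem ℓ⟩ with hw
  have hliw : LinearIndependent ℝ w := by
    apply LinearIndependent.of_comp (LinearMap.ker f).subtype
    exact hli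
  have hcard := hliw.fintype_card_le_finrank
  have hcard2 : Fintype.card {x : Fin n // x ≠ ℓ0} = n - 1 := by
    rw [Fintype.card_subtype_compl]
    simp
  rw [hcard2] at hcard
  omega

lemma sum_indicator {n : ℕ} (T : Finset (Fin n)) (g : Fin n → ℝ) :
    ∑ t, g t * (if t ∈ T then (1:ℝ) else 0) = ∑ t ∈ T, g t := by
  simp [mul_ite, Finset.sum_ite_mem]

/-- Claim 1: for a non-trivial facet-defining inequality `πᵀx ≤ 1` of the
convex hull of a TOMKS with the given minimal cover set, `π_i = 0` for `i ∈ {q+1,…,n}`. -/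
theorem facet_claim1 {m n : ℕ} (A : Fin m → Fin n → ℕ) (b : Fin m → ℕ)
    (hA : ColsOrdered A) (p q : ℕ) (hp : 1 ≤ p) (hpq : p + 2 ≤ q) (hq : q ≤ n)
    (hmin : ∀ S : Finset (Fin n), IsMinimalCover A b S ↔
      (S = Finset.univ.filter (fun i : Fin n => (i : ℕ) + 1 ≤ q ∧ (i : ℕ) + 1 ≠ p) ∨
       ∃ i₀ : Fin n, p < (i₀ : ℕ) + 1 ∧ (i₀ : ℕ) + 1 ≤ q ∧
         S = Finset.univ.filter (fun i : Fin n => (i : ℕ) + 1 ≤ p ∨ i = i₀)))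
    (pv : Fin n → ℝ) (hpv : IsNontrivialFacet A b pv) :
    ∀ i : Fin n, q < (i : ℕ) + 1 → pv i = 0 := by
  intro i hi
  obtain ⟨hnonneg, ⟨a, c, hac, ha, hc⟩, hvalid, pts, haff, hpts⟩ := hpv
  by_contra hpvi
  have hpvipos : 0 < pv i := (hnonneg i).lt_of_ne (Ne.symm hpvi)
  have hMq : ∀ M, IsMinimalCover A b M → ∀ t ∈ M, (t : ℕ) + 1 ≤ q := by
    intro M hM t ht
    rcases (hmin M).mp hM with h | ⟨i₀, hi₀p, hi₀q, h⟩
    · subst h; exact (Finset.mem_filter.mp ht).2.1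
    · subst h
      rcases (Finset.mem_filter.mp ht).2 with h' | h'
      · omega
      · subst h'; exact hi₀q
  by_cases hall : ∀ ℓ, pts ℓ i = 1
  · have hn : 3 ≤ n := by omega
    have h2 : ∀ ℓ, ∑ k, pv k * pts ℓ k = 1 := fun ℓ => (hpts ℓ).2.2
    have hz := key_linalg hn pv i pts haff hall h2
    rcases eq_or_ne a i with rfl | h
    · exact hc (hz c (fun hci => hac hci.symm))
    · exact ha (hz a h)
  · push_neg at hall
    obtain ⟨ℓ, hℓ⟩ := hall
    obtain ⟨hx01, hxK, hxtight⟩ := hpts ℓ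
    set x := pts ℓ with hxdef
    have hxi : x i = 0 := (hx01 i).resolve_right hℓ
    set S : Finset (Fin n) := Finset.univ.filter (fun t => x t = 1) with hS
    have hiS : i ∉ S := by
      simp only [hS, Finset.mem_filter]
      rintro ⟨-, h⟩
      rw [hxi] at h; norm_num at h
    have hxval : ∀ g : Fin n → ℝ, ∑ t, g t * x t = ∑ t ∈ S, g t := by
      intro g
      rw [hS, Finset.sum_filter]
      refine Finset.sum_congr rfl fun t _ => ?_
      rcases hx01 t with h | h <;> simp [h]
    have hSnc : ¬ IsCover A b S := by
      rintro ⟨j, hj⟩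
      have h1 := hxK j
      rw [hxval (fun t => (A j t : ℝ))] at h1
      have h2 : ((∑ t ∈ S, A j t : ℕ) : ℝ) ≤ (b j : ℝ) := by push_cast; exact h1
      exact absurd (Nat.cast_le.mp h2) (not_le.mpr hj)
    have hS' : ¬ IsCover A b (insert i S) := by
      intro hcov
      obtain ⟨M, hMsub, hMmin⟩ := cover_contains_minimal A b _ hcov
      have hiM : i ∉ M := fun hiM => by have := hMq M hMmin i hiM; omega
      have hMS : M ⊆ S := by
        intro t ht
        rcases Finset.mem_insert.mp (hMsub ht) with rfl | h
        · exact absurd ht hiM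
        · exact h
      obtain ⟨j, hj⟩ := hMmin.1
      exact hSnc ⟨j, lt_of_lt_of_le hj (Finset.sum_le_sum_of_subset hMS)⟩
    -- validity on insert i S
    have hvx := hvalid (fun t => if t ∈ insert i S then (1:ℝ) else 0)
      (fun t => by by_cases h : t ∈ insert i S <;> simp [h])
      (by
        intro j
        rw [sum_indicator]
        have hle : ∑ t ∈ insert i S, A j t ≤ b j := by
          by_contra h
          exact hS' ⟨j, by omega⟩
        calc ∑ t ∈ insert i S, (A j t : ℝ) = ((∑ t ∈ insert i S, A j t : ℕ) : ℝ) := by push_cast; ring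
          _ ≤ (b j : ℝ) := Nat.cast_le.mpr hle)
    rw [sum_indicator] at hvx
    rw [Finset.sum_insert hiS] at hvx
    have hSone : ∑ t ∈ S, pv t = 1 := by rw [← hxval pv]; exact hxtight
    rw [hSone] at hvx
    linarith
end

section
/- Let K be a TOMKS in {0,1}^n whose set of minimal covers is exactly { {1,…,q} \ {p} } ∪ { {1,…,p} ∪ {j} : j = p+1,…,q }, where 1 ≤ p ≤ q − 2 and q ≤ n, and let πᵀx ≤ 1 be a non-trivial facet-defining inequality for the convex hull of K. Then Σ_{j=1}^n π_j > 1 and π_i = Σ_{j=1}^n π_j − 1 for every i ∈ {1,…,p−1}. -/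
open Finset

lemma key_dim {n : ℕ} (f g : (Fin n → ℝ) →ₗ[ℝ] ℝ)
    (x y : Fin n → ℝ) (hfx : f x = 0) (hgx : g x ≠ 0) (hfy : f y ≠ 0)
    (i0 : Fin n) (u : {k : Fin n // k ≠ i0} → (Fin n → ℝ))
    (hu : LinearIndependent ℝ u) (hfu : ∀ k, f (u k) = 0) (hgu : ∀ k, g (u k) = 0) :
    False := by
  set Φ := f.prod g with hΦ
  have hsurj : Function.Surjective Φ := by
    rintro ⟨a, c⟩
    refine ⟨(a / f y) • y + ((c - (a / f y) * g y) / g x) • x, ?_⟩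
    simp only [hΦ, LinearMap.prod_apply, Function.prod, map_add, map_smul, smul_eq_mul, hfx,
      Prod.smul_mk, Prod.mk_add_mk, smul_eq_mul, mul_zero, Prod.mk.injEq]
    constructor
    · field_simp; simp
    · field_simp; ring
  have hrank := LinearMap.finrank_range_add_finrank_ker Φ
  have hrange : Module.finrank ℝ (LinearMap.range Φ) = 2 := by
    rw [LinearMap.range_eq_top.mpr hsurj, finrank_top]
    simp [Module.finrank_prod]
  have hmem : ∀ k, u k ∈ LinearMap.ker Φ := fun k => by
    simp [hΦ, LinearMap.mem_ker, LinearMap.prod_apply, Function.prod, hfu k, hgu k]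
  have h1 : Submodule.span ℝ (Set.range u) ≤ LinearMap.ker Φ :=
    Submodule.span_le.mpr (by rintro _ ⟨k, rfl⟩; exact hmem k)
  have h2 : Module.finrank ℝ (Submodule.span ℝ (Set.range u)) = Fintype.card {k : Fin n // k ≠ i0} :=
    finrank_span_eq_card hu
  have h3 := Submodule.finrank_mono h1
  have hcard : Fintype.card {k : Fin n // k ≠ i0} = n - 1 := by
    have := Fintype.card_subtype_compl (fun k : Fin n => k = i0)
    simp only [Fintype.card_subtype_eq, Fintype.card_fin] at this; exact this
  have hn : 1 ≤ n := i0.pos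
  rw [h2, hcard] at h3
  rw [hrange, Module.finrank_fin_fun] at hrank
  omega

lemma cover_has_minimal {m n : ℕ} (A : Fin m → Fin n → ℕ) (b : Fin m → ℕ)
    (S : Finset (Fin n)) : IsCover A b S → ∃ T ⊆ S, IsMinimalCover A b T := by
  classical
  induction S using Finset.strongInduction with
  | _ S ih =>
    intro hS
    by_cases h : ∀ S' ⊂ S, ¬ IsCover A b S'
    · exact ⟨S, subset_rfl, hS, h⟩
    · push_neg at h
      obtain ⟨S', hsub, hc⟩ := h
      obtain ⟨T, hT, hmc⟩ := ih S' hsub hc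
      exact ⟨T, hT.trans hsub.subset, hmc⟩


/-- Claim 2: for a non-trivial facet-defining inequality `πᵀx ≤ 1` of the
convex hull of a TOMKS with the given minimal cover set, `Σ_j π_j > 1` and
`π_i = Σ_j π_j − 1` for every `i ∈ {1,…,p−1}`. -/
theorem facet_claim2 {m n : ℕ} (A : Fin m → Fin n → ℕ) (b : Fin m → ℕ)
    (hA : ColsOrdered A) (p q : ℕ) (hp : 1 ≤ p) (hpq : p + 2 ≤ q) (hq : q ≤ n)
    (hmin : ∀ S : Finset (Fin n), IsMinimalCover A b S ↔
      (S = Finset.univ.filter (fun i : Fin n => (i : ℕ) + 1 ≤ q ∧ (i : ℕ) + 1 ≠ p) ∨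
       ∃ i₀ : Fin n, p < (i₀ : ℕ) + 1 ∧ (i₀ : ℕ) + 1 ≤ q ∧
         S = Finset.univ.filter (fun i : Fin n => (i : ℕ) + 1 ≤ p ∨ i = i₀)))
    (pv : Fin n → ℝ) (hpv : IsNontrivialFacet A b pv) :
    1 < ∑ j, pv j ∧ ∀ i : Fin n, (i : ℕ) + 2 ≤ p → pv i = (∑ j, pv j) - 1 := by
  classical
  obtain ⟨hnn, ⟨j1, j2, hj12, hpj1, hpj2⟩, hvalid, pts, haff, hpts⟩ := hpv
  have hn3 : 3 ≤ n := by omega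
  set i0 : Fin n := ⟨0, by omega⟩ with hi0
  set u : {k : Fin n // k ≠ i0} → (Fin n → ℝ) := fun k => pts k - pts i0 with hu_def
  have hu : LinearIndependent ℝ u := by
    have := (affineIndependent_iff_linearIndependent_vsub ℝ pts i0).mp haff
    simpa [hu_def, vsub_eq_sub] using this
  set dot : (Fin n → ℝ) →ₗ[ℝ] ℝ :=
    { toFun := fun z => ∑ t, pv t * z t
      map_add' := fun z w => by
        simp only [Pi.add_apply, mul_add]
        exact Finset.sum_add_distrib
      map_smul' := fun c z => by
        simp only [Pi.smul_apply, smul_eq_mul, RingHom.id_apply, Finset.mul_sum]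
        exact Finset.sum_congr rfl fun t _ => by ring } with hdot
  have hdot_apply : ∀ z, dot z = ∑ t, pv t * z t := fun z => rfl
  have htight : ∀ ℓ, dot (pts ℓ) = 1 := fun ℓ => (hpts ℓ).2.2
  -- Part A : 1 < ∑ pv
  have hA1 : (1:ℝ) < ∑ j, pv j := by
    by_contra hle
    push_neg at hle
    have hcoord : ∀ ℓ (j' : Fin n), pv j' ≠ 0 → pts ℓ j' = 1 := by
      intro ℓ j' hj'
      obtain ⟨h01, _, ht⟩ := hpts ℓ
      have hterm : ∀ t ∈ Finset.univ, pv t * pts ℓ t ≤ pv t := by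
        intro t _
        rcases h01 t with h | h
        · simp only [h, mul_zero]; exact hnn t
        · simp [h]
      have hsums : ∑ t, pv t * pts ℓ t = ∑ t, pv t := by
        refine le_antisymm (Finset.sum_le_sum hterm) ?_
        rw [ht]; exact hle
      have heach := (Finset.sum_eq_sum_iff_of_le hterm).mp hsums j' (Finset.mem_univ j')
      rcases h01 j' with h | h
      · rw [h, mul_zero] at heach; exact absurd heach.symm hj'
      · exact h
    exact key_dim (LinearMap.proj j1) (LinearMap.proj j2)
      (Pi.single j2 1) (Pi.single j1 1)
      (by simp [LinearMap.proj_apply, Pi.single_eq_of_ne hj12])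
      (by simp [LinearMap.proj_apply])
      (by simp [LinearMap.proj_apply])
      i0 u hu
      (fun k => by
        simp only [hu_def, LinearMap.proj_apply, Pi.sub_apply,
          hcoord _ _ hpj1, sub_self])
      (fun k => by
        simp only [hu_def, LinearMap.proj_apply, Pi.sub_apply,
          hcoord _ _ hpj2, sub_self])
  refine ⟨hA1, ?_⟩
  intro i hi
  -- Step 1 : ∑ pv − pv i ≤ 1, using that univ.erase i ∈ K
  have hstep1 : (∑ j, pv j) - pv i ≤ 1 := by
    have hnotcover : ¬ IsCover A b (Finset.univ.erase i) := by
      intro hc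
      obtain ⟨T, hTsub, hTmin⟩ := cover_has_minimal A b _ hc
      have hiT : i ∈ T := by
        rcases (hmin T).mp hTmin with h | ⟨i₀, hi₀1, hi₀2, h⟩
        · rw [h]; simp only [Finset.mem_filter, Finset.mem_univ, true_and]; omega
        · rw [h]; simp only [Finset.mem_filter, Finset.mem_univ, true_and]
          exact Or.inl (by omega)
      exact (Finset.mem_erase.mp (hTsub hiT)).1 rfl
    set x : Fin n → ℝ := fun ℓ => if ℓ = i then 0 else 1 with hx
    have hxsum : ∀ f : Fin n → ℝ, ∑ ℓ, f ℓ * x ℓ = ∑ ℓ ∈ Finset.univ.erase i, f ℓ := by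
      intro f
      rw [← Finset.sum_erase_add Finset.univ _ (Finset.mem_univ i)]
      have hxi : x i = 0 := by simp [hx]
      rw [hxi, mul_zero, add_zero]
      refine Finset.sum_congr rfl fun ℓ hℓ => ?_
      have : ℓ ≠ i := (Finset.mem_erase.mp hℓ).1
      simp [hx, this]
    have h01 : ∀ ℓ, x ℓ = 0 ∨ x ℓ = 1 := fun ℓ => by
      by_cases h : ℓ = i <;> simp [hx, h]
    have hAx : ∀ j, ∑ ℓ, (A j ℓ : ℝ) * x ℓ ≤ (b j : ℝ) := by
      intro j
      have hb : ∑ ℓ ∈ Finset.univ.erase i, A j ℓ ≤ b j := by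
        by_contra hlt; push_neg at hlt; exact hnotcover ⟨j, hlt⟩
      rw [hxsum]
      calc ∑ ℓ ∈ Finset.univ.erase i, (A j ℓ : ℝ)
          = ((∑ ℓ ∈ Finset.univ.erase i, A j ℓ : ℕ) : ℝ) := by rw [Nat.cast_sum]
        _ ≤ (b j : ℝ) := by exact_mod_cast hb
    have hval := hvalid x h01 hAx
    rw [hxsum pv, Finset.sum_erase_eq_sub (Finset.mem_univ i)] at hval
    exact hval
  -- Step 2 : 1 ≤ ∑ pv − pv i
  have hstep2 : 1 ≤ (∑ j, pv j) - pv i := by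
    by_contra hlt
    push_neg at hlt
    have hcoord : ∀ ℓ, pts ℓ i = 1 := by
      intro ℓ
      obtain ⟨h01, _, ht⟩ := hpts ℓ
      have hsplit : ∑ t ∈ Finset.univ.erase i, pv t * pts ℓ t + pv i * pts ℓ i = 1 := by
        rw [Finset.sum_erase_add Finset.univ _ (Finset.mem_univ i)]; exact ht
      have hbound : ∑ t ∈ Finset.univ.erase i, pv t * pts ℓ t ≤
          ∑ t ∈ Finset.univ.erase i, pv t := by
        refine Finset.sum_le_sum fun t _ => ?_
        rcases h01 t with h | h
        · simp only [h, mul_zero]; exact hnn t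
        · simp [h]
      have herase : ∑ t ∈ Finset.univ.erase i, pv t = (∑ t, pv t) - pv i :=
        Finset.sum_erase_eq_sub (Finset.mem_univ i)
      have h2 : 0 < pv i * pts ℓ i := by
        rw [herase] at hbound; linarith
      rcases h01 i with h | h
      · rw [h, mul_zero] at h2; exact absurd h2 (lt_irrefl 0)
      · exact h
    obtain ⟨j', hj'i, hj'nz⟩ : ∃ j', j' ≠ i ∧ pv j' ≠ 0 := by
      by_cases h : j1 = i
      · exact ⟨j2, fun hc => hj12 (h.trans hc.symm), hpj2⟩
      · exact ⟨j1, h, hpj1⟩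
    exact key_dim (LinearMap.proj i) dot (Pi.single j' 1) (Pi.single i 1)
      (by simp [LinearMap.proj_apply, Pi.single_eq_of_ne hj'i.symm])
      (by
        rw [hdot_apply]
        have : ∑ t, pv t * (Pi.single j' 1 : Fin n → ℝ) t = pv j' := by
          rw [Finset.sum_eq_single j']
          · simp
          · intro t _ htne
            rw [Pi.single_eq_of_ne htne, mul_zero]
          · intro h; exact absurd (Finset.mem_univ j') h
        rw [this]; exact hj'nz)
      (by simp [LinearMap.proj_apply])
      i0 u hu
      (fun k => by
        simp only [hu_def, LinearMap.proj_apply, Pi.sub_apply, hcoord, sub_self])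
      (fun k => by
        show dot (pts k - pts i0) = 0
        rw [map_sub, htight, htight, sub_self])
  linarith
end
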